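/- arXiv:1609.03891 — 3 statements merged into one kernel-verified Lean document; each statement's English description precedes it below -/
import Mathlib

section
/- Let σⁿ = (σⁿ_t; t ∈ {0,1,…,t_n}) be a permutation process of the symmetric group S_n (with σⁿ_0 the identity) for each n, with t_n → ∞ as n → ∞. Suppose the trajectory processes Xⁿ (Borel probability measures on C([0,1],[-1,1])) converge weakly to the law of a stochastic process X with continuous sample paths. Then X is a permuton process, i.e. X(t) is uniformly distributed on [-1,1] for every t ∈ [0,1]. -/
open MeasureTheory Set Filter
open scoped ENNReal Real Topology

noncomputable def unif : Measure ℝ := (2 : ℝ≥0∞)⁻¹ • (volume.restrict (Icc (-1 : ℝ) 1))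

open scoped NNReal

/-! At a time `s` where the particles occupy the `n` grid points `2 (j + 1) / n - 1` in some
order, `(1 / n) ∑ᵢ g (Tₙ i s)` is a Riemann sum of `g` against the uniform law. Since `tₙ → ∞`,
every window `|s - t| ≤ δ` eventually contains such a time, so the average of
`sup_{|s - t| ≤ δ} g (Tₙ i s)` eventually dominates the Riemann sum. This functional of the path is
uniformly continuous and bounded for bounded Lipschitz `g`, so in the limit
`∫ g d(unif) ≤ E [sup_{|s - t| ≤ δ} g (X s)]`; letting `δ → 0` (continuity of paths) and replacing
`g` by `-g` gives `E [g (X t)] = ∫ g d(unif)`, and bounded Lipschitz functions determine a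
probability measure on `ℝ`. -/

instance : IsProbabilityMeasure unif := by
  constructor
  simp [unif, Measure.restrict_apply, Real.volume_Icc, one_add_one_eq_two,
    ENNReal.inv_mul_cancel]

lemma integral_unif (g : ℝ → ℝ) : ∫ x, g x ∂unif = 2⁻¹ * ∫ x in (-1 : ℝ)..1, g x := by
  rw [unif, integral_smul_measure, intervalIntegral.integral_of_le (by norm_num),
    ← integral_Icc_eq_integral_Ioc]
  simp

section RiemannSum

variable {g : ℝ → ℝ} {L : ℝ≥0}

lemma LipschitzWith.abs_intervalIntegral_sub_mul_le (hg : LipschitzWith L g) {a b : ℝ}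
    (hab : a ≤ b) : |(∫ x in a..b, g x) - (b - a) * g b| ≤ L * (b - a) ^ 2 := by
  have hbound : ∀ x ∈ uIoc a b, ‖g x - g b‖ ≤ L * (b - a) := fun x hx => by
    rw [uIoc_of_le hab] at hx
    calc ‖g x - g b‖ = dist (g x) (g b) := rfl
      _ ≤ L * dist x b := hg.dist_le_mul x b
      _ ≤ L * (b - a) := by
        gcongr
        rw [Real.dist_eq, abs_sub_comm, abs_of_nonneg (by linarith [hx.2])]
        linarith [hx.1]
  have h := intervalIntegral.norm_integral_le_of_norm_le_const hbound
  rw [intervalIntegral.integral_sub (hg.continuous.intervalIntegrable _ _) intervalIntegrable_const,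
    intervalIntegral.integral_const, smul_eq_mul, abs_of_nonneg (sub_nonneg.2 hab)] at h
  calc _ = ‖(∫ x in a..b, g x) - (b - a) * g b‖ := rfl
    _ ≤ L * (b - a) * (b - a) := h
    _ = L * (b - a) ^ 2 := by ring

lemma LipschitzWith.abs_intervalIntegral_sub_riemannSum_le (hg : LipschitzWith L g) (a : ℝ)
    {h : ℝ} (hh : 0 ≤ h) (n : ℕ) :
    |(∫ x in a..a + n * h, g x) - ∑ k ∈ Finset.range n, h * g (a + (k + 1) * h)|
      ≤ n * (L * h ^ 2) := by
  induction n with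
  | zero => simp
  | succ n ih =>
    have hstep := hg.abs_intervalIntegral_sub_mul_le
      (by nlinarith : a + n * h ≤ a + (n + 1) * h)
    rw [show a + (n + 1) * h - (a + n * h) = h by ring] at hstep
    push_cast
    rw [← intervalIntegral.integral_add_adjacent_intervals (b := a + n * h)
      (hg.continuous.intervalIntegrable _ _) (hg.continuous.intervalIntegrable _ _),
      Finset.sum_range_succ]
    calc _ = |((∫ x in a..a + n * h, g x) - ∑ k ∈ Finset.range n, h * g (a + (k + 1) * h))
          + ((∫ x in a + n * h..a + (n + 1) * h, g x) - h * g (a + (n + 1) * h))| := by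
          ring_nf
      _ ≤ n * (L * h ^ 2) + L * h ^ 2 := (abs_add_le _ _).trans (add_le_add ih hstep)
      _ = (n + 1) * (L * h ^ 2) := by ring

-- The rescaled position `2 r / n - 1` of rank `r = j + 1`, as `Fin n` counts from `0`.
noncomputable def gridPoint (n : ℕ) (j : Fin n) : ℝ := 2 * ((j : ℕ) + 1) / n - 1

lemma LipschitzWith.tendsto_average_gridPoint (hg : LipschitzWith L g) :
    Tendsto (fun n : ℕ => 1 / (n : ℝ) * ∑ j : Fin n, g (gridPoint n j)) atTop
      (𝓝 (∫ x, g x ∂unif)) := by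
  have hrate : ∀ᶠ n : ℕ in atTop,
      ‖1 / (n : ℝ) * ∑ j : Fin n, g (gridPoint n j) - ∫ x, g x ∂unif‖ ≤ 2 * L / n := by
    filter_upwards [eventually_gt_atTop 0] with n hn
    have hn' : (0 : ℝ) < n := Nat.cast_pos.2 hn
    have herr := hg.abs_intervalIntegral_sub_riemannSum_le (-1) (h := 2 / n) (by positivity) n
    rw [show -1 + n * (2 / n : ℝ) = 1 by field_simp; ring, ← Finset.mul_sum] at herr
    have hsum : ∑ j : Fin n, g (gridPoint n j)
        = ∑ k ∈ Finset.range n, g (-1 + (k + 1) * (2 / n)) := by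
      rw [← Fin.sum_univ_eq_sum_range (fun k => g (-1 + (k + 1) * (2 / n)))]
      congr! 2 with j
      rw [gridPoint]
      ring
    rw [integral_unif, hsum, Real.norm_eq_abs]
    set S := ∑ k ∈ Finset.range n, g (-1 + (k + 1) * (2 / n))
    calc _ = 2⁻¹ * |(∫ x in (-1 : ℝ)..1, g x) - 2 / n * S| := by
          rw [← abs_of_pos (by norm_num : (0 : ℝ) < 2⁻¹), ← abs_mul, ← abs_neg]
          congr 1
          field_simp
          ring
      _ ≤ 2⁻¹ * (n * (L * (2 / n) ^ 2)) := by gcongr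
      _ = 2 * L / n := by field_simp
  rw [tendsto_iff_norm_sub_tendsto_zero]
  exact squeeze_zero' (.of_forall fun _ => norm_nonneg _) hrate
    (tendsto_const_nhds.div_atTop tendsto_natCast_atTop_atTop)

end RiemannSum

lemma MeasureTheory.Measure.ext_of_forall_lipschitz_integral_eq {Ω : Type*} [MeasurableSpace Ω]
    [PseudoEMetricSpace Ω] [BorelSpace Ω] {μ ν : Measure Ω} [IsProbabilityMeasure μ]
    [IsProbabilityMeasure ν]
    (h : ∀ f : Ω → ℝ, (∃ C, ∀ x, |f x| ≤ C) → (∃ L, LipschitzWith L f) →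
      ∫ x, f x ∂μ = ∫ x, f x ∂ν) :
    μ = ν := by
  obtain ⟨x₀⟩ := nonempty_of_isProbabilityMeasure μ
  let μ' : ProbabilityMeasure Ω := ⟨μ, ‹_›⟩
  let ν' : ProbabilityMeasure Ω := ⟨ν, ‹_›⟩
  have hconst : Tendsto (fun _ : ℕ => μ') atTop (𝓝 ν') := by
    refine tendsto_iff_forall_lipschitz_integral_tendsto.2 fun f ⟨C, hC⟩ hf => ?_
    have hbound : ∀ x, |f x| ≤ C + |f x₀| := fun x => by
      linarith [abs_sub_abs_le_abs_sub (f x) (f x₀), (Real.dist_eq _ _).symm.trans_le (hC x x₀)]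
    show Tendsto (fun _ => ∫ x, f x ∂μ) atTop (𝓝 (∫ x, f x ∂ν))
    rw [h f ⟨_, hbound⟩ hf]
    exact tendsto_const_nhds
  have hμν : μ' = ν' := tendsto_nhds_unique tendsto_const_nhds hconst
  exact congrArg Subtype.val hμν

theorem Measurable.iSup_of_continuous {Ω γ : Type*} [MeasurableSpace Ω] [TopologicalSpace γ]
    [TopologicalSpace.SeparableSpace γ] {f : γ → Ω → ℝ} (hcont : ∀ ω, Continuous fun s => f s ω)
    (hmeas : ∀ s, Measurable (f s)) :
    Measurable fun ω => ⨆ s, f s ω := by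
  obtain ⟨S, hS, hdense⟩ := TopologicalSpace.exists_countable_dense γ
  have := hS.to_subtype
  simp_rw [← hdense.ciSup' (hcont _)]
  exact Measurable.iSup fun s => hmeas s

section SupOn

variable {K : Type*} [TopologicalSpace K] {W : Set K} {g : ℝ → ℝ}

noncomputable def supOn (W : Set K) (g : ℝ → ℝ) (f : C(K, ℝ)) : ℝ := ⨆ s : W, g (f s)

lemma le_supOn [CompactSpace K] (hg : Continuous g) (f : C(K, ℝ)) {s : K} (hs : s ∈ W) :
    g (f s) ≤ supOn W g f :=
  le_ciSup ((isCompact_range (hg.comp f.continuous)).bddAbove.mono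
    (range_comp_subset_range Subtype.val (g ∘ f))) ⟨s, hs⟩

lemma supOn_le (hW : W.Nonempty) {f : C(K, ℝ)} {c : ℝ} (h : ∀ s ∈ W, g (f s) ≤ c) :
    supOn W g f ≤ c :=
  have := hW.to_subtype
  ciSup_le fun s => h s s.2

lemma abs_supOn_le [CompactSpace K] (hW : W.Nonempty) (hg : Continuous g) {C : ℝ}
    (hC : ∀ x, |g x| ≤ C) (f : C(K, ℝ)) : |supOn W g f| ≤ C := by
  obtain ⟨s, hs⟩ := hW
  refine abs_le.2 ⟨?_, supOn_le ⟨s, hs⟩ fun s _ => (abs_le.1 (hC _)).2⟩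
  exact (abs_le.1 (hC _)).1.trans (le_supOn hg f hs)

lemma lipschitzWith_supOn [CompactSpace K] {L : ℝ≥0} (hg : LipschitzWith L g)
    (hW : W.Nonempty) : LipschitzWith L (supOn W g) := by
  refine LipschitzWith.of_le_add_mul L fun f f' => supOn_le hW fun s hs => ?_
  have hgs := hg.dist_le_mul (f s) (f' s)
  rw [Real.dist_eq] at hgs
  calc g (f s) ≤ g (f' s) + L * dist (f s) (f' s) := by
        linarith [le_abs_self (g (f s) - g (f' s))]
    _ ≤ supOn W g f' + L * dist f f' := by
        gcongr
        · exact le_supOn hg.continuous f' hs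
        · exact ContinuousMap.dist_apply_le_dist s

lemma tendsto_supOn_closedBall {K : Type*} [PseudoMetricSpace K] [CompactSpace K]
    (hg : Continuous g) (f : C(K, ℝ)) (t : K) :
    Tendsto (fun δ => supOn (Metric.closedBall t δ) g f) (𝓝[>] 0) (𝓝 (g (f t))) := by
  refine tendsto_order.2 ⟨fun a ha => ?_, fun b hb => ?_⟩
  · filter_upwards [self_mem_nhdsWithin] with δ hδ
    exact ha.trans_le (le_supOn hg f (Metric.mem_closedBall_self (le_of_lt hδ)))
  · obtain ⟨b', hfb', hb'⟩ := exists_between hb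
    obtain ⟨η, hη, hclose⟩ := Metric.eventually_nhds_iff.1
      ((hg.comp f.continuous).continuousAt.eventually (gt_mem_nhds hfb'))
    filter_upwards [Ioo_mem_nhdsGT hη] with δ hδ
    refine lt_of_le_of_lt (supOn_le ⟨t, Metric.mem_closedBall_self hδ.1.le⟩ fun s hs => ?_) hb'
    exact (hclose ((Metric.mem_closedBall.1 hs).trans_lt hδ.2)).le

end SupOn

def IsPermutationAt {K : Type*} [TopologicalSpace K] {n : ℕ} (T : Fin n → C(K, ℝ)) (s : K) :
    Prop :=
  ∃ τ : Equiv.Perm (Fin n), ∀ i, T i s = gridPoint n (τ i)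

lemma IsPermutationAt.sum_gridPoint_le_sum_supOn {K : Type*} [TopologicalSpace K] [CompactSpace K]
    {n : ℕ} {T : Fin n → C(K, ℝ)} {s : K} (hT : IsPermutationAt T s) {W : Set K} (hs : s ∈ W)
    {g : ℝ → ℝ} (hg : Continuous g) :
    ∑ j, g (gridPoint n j) ≤ ∑ i, supOn W g (T i) := by
  obtain ⟨τ, hτ⟩ := hT
  rw [← Equiv.sum_comp τ]
  refine Finset.sum_le_sum fun i _ => ?_
  rw [← hτ]
  exact le_supOn hg (T i) hs

def TendstoEmpirical {K Ω : Type*} [TopologicalSpace K] [CompactSpace K] [MeasurableSpace Ω]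
    (T : (n : ℕ) → Fin n → C(K, ℝ)) (P : Measure Ω) (Y : Ω → C(K, ℝ)) : Prop :=
  ∀ F : C(K, ℝ) → ℝ, UniformContinuous F → (∃ M : ℝ, ∀ f, |F f| ≤ M) →
    Tendsto (fun n : ℕ => (1 / (n : ℝ)) * ∑ i : Fin n, F (T n i)) atTop (𝓝 (∫ ω, F (Y ω) ∂P))

section EmpiricalLimit

variable {K Ω : Type*} [PseudoMetricSpace K] [CompactSpace K] [MeasurableSpace Ω]
  {P : Measure Ω} [IsFiniteMeasure P] {T : (n : ℕ) → Fin n → C(K, ℝ)} {Y : Ω → C(K, ℝ)}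
  {t : K} {g : ℝ → ℝ} {L : ℝ≥0} {C : ℝ}

lemma integral_unif_le_integral_eval (hY : ∀ s, Measurable fun ω => Y ω s)
    (hTY : TendstoEmpirical T P Y)
    (hperm : ∀ δ > 0, ∀ᶠ n in atTop, ∃ s ∈ Metric.closedBall t δ, IsPermutationAt (T n) s)
    (hg : LipschitzWith L g) (hC : ∀ x, |g x| ≤ C) :
    ∫ x, g x ∂unif ≤ ∫ ω, g (Y ω t) ∂P := by
  have hW : ∀ δ > (0 : ℝ), (Metric.closedBall t δ).Nonempty := fun δ hδ =>
    ⟨t, Metric.mem_closedBall_self hδ.le⟩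
  have hwindow : ∀ δ > 0, ∫ x, g x ∂unif ≤ ∫ ω, supOn (Metric.closedBall t δ) g (Y ω) ∂P := by
    intro δ hδ
    have hlim := hTY _ (lipschitzWith_supOn hg (hW δ hδ)).uniformContinuous
      ⟨C, abs_supOn_le (hW δ hδ) hg.continuous hC⟩
    refine le_of_tendsto_of_tendsto hg.tendsto_average_gridPoint hlim ?_
    filter_upwards [hperm δ hδ] with n ⟨s, hs, hTs⟩
    exact mul_le_mul_of_nonneg_left (hTs.sum_gridPoint_le_sum_supOn hs hg.continuous)
      (by positivity)
  have hshrink : Tendsto (fun δ => ∫ ω, supOn (Metric.closedBall t δ) g (Y ω) ∂P) (𝓝[>] 0)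
      (𝓝 (∫ ω, g (Y ω t) ∂P)) := by
    refine tendsto_integral_filter_of_dominated_convergence (fun _ => C) ?_ ?_
      (integrable_const C) (.of_forall fun ω => tendsto_supOn_closedBall hg.continuous (Y ω) t)
    · refine .of_forall fun δ =>
        (Measurable.iSup_of_continuous (fun ω => ?_) fun s => ?_).aestronglyMeasurable
      · exact hg.continuous.comp ((Y ω).continuous.comp continuous_subtype_val)
      · exact hg.continuous.measurable.comp (hY s)
    · filter_upwards [self_mem_nhdsWithin] with δ hδ
      exact .of_forall fun ω => abs_supOn_le (hW δ hδ) hg.continuous hC (Y ω)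
  exact ge_of_tendsto hshrink (eventually_nhdsWithin_of_forall hwindow)

lemma integral_eval_eq_integral_unif (hY : ∀ s, Measurable fun ω => Y ω s)
    (hTY : TendstoEmpirical T P Y)
    (hperm : ∀ δ > 0, ∀ᶠ n in atTop, ∃ s ∈ Metric.closedBall t δ, IsPermutationAt (T n) s)
    (hg : LipschitzWith L g) (hC : ∀ x, |g x| ≤ C) :
    ∫ ω, g (Y ω t) ∂P = ∫ x, g x ∂unif := by
  have hneg := integral_unif_le_integral_eval hY hTY hperm hg.neg (g := fun x => -g x)
    fun x => (abs_neg (g x)).trans_le (hC x)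
  simp only [integral_neg, neg_le_neg_iff] at hneg
  exact le_antisymm hneg (integral_unif_le_integral_eval hY hTY hperm hg hC)

end EmpiricalLimit

lemma exists_nat_div_near {t : ℝ} (ht : t ∈ Icc (0 : ℝ) 1) {m : ℕ} (hm : 0 < m) :
    ∃ k < m, |(k : ℝ) / m - t| ≤ 1 / m := by
  have hm' : (0 : ℝ) < m := Nat.cast_pos.2 hm
  have htm : 0 ≤ t * m := mul_nonneg ht.1 hm'.le
  refine ⟨min ⌊t * m⌋₊ (m - 1), by omega, ?_⟩
  rw [show ((min ⌊t * m⌋₊ (m - 1) : ℕ) : ℝ) / m - t = ((min ⌊t * m⌋₊ (m - 1) : ℕ) - t * m) / m by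
    field_simp, abs_div, abs_of_pos hm', div_le_div_iff_of_pos_right hm', abs_le]
  have hle : ((min ⌊t * m⌋₊ (m - 1) : ℕ) : ℝ) ≤ t * m :=
    (Nat.cast_le.2 (min_le_left _ _)).trans (Nat.floor_le htm)
  refine ⟨?_, by linarith⟩
  rcases min_choice ⌊t * m⌋₊ (m - 1) with h | h <;> rw [h]
  · linarith [Nat.lt_floor_add_one (t * m)]
  · rw [Nat.cast_sub hm, Nat.cast_one]
    nlinarith [ht.2]

lemma isPermutationAt_of_interpolation {n m : ℕ} {τ : ℕ → Equiv.Perm (Fin n)}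
    {T : Fin n → C(Icc (0 : ℝ) 1, ℝ)}
    (hT : ∀ i : Fin n, ∀ k : ℕ, k < m → ∀ s : Icc (0 : ℝ) 1,
      (k : ℝ) / m ≤ (s : ℝ) → (s : ℝ) ≤ ((k : ℝ) + 1) / m →
      T i s = (m : ℝ) * ((((k : ℝ) + 1) / m - (s : ℝ)) * gridPoint n (τ k i) +
        ((s : ℝ) - (k : ℝ) / m) * gridPoint n (τ (k + 1) i)))
    {k : ℕ} (hk : k < m) (s : Icc (0 : ℝ) 1) (hs : (s : ℝ) = k / m) :
    IsPermutationAt T s := by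
  have hm : (0 : ℝ) < m := Nat.cast_pos.2 (by omega)
  refine ⟨τ k, fun i => ?_⟩
  rw [hT i k hk s hs.ge (by rw [hs]; gcongr; linarith), hs]
  field_simp
  ring

lemma eventually_exists_isPermutationAt {tn : ℕ → ℕ} (htn : Tendsto tn atTop atTop)
    {σ : (n : ℕ) → ℕ → Equiv.Perm (Fin n)} {T : (n : ℕ) → Fin n → C(Icc (0 : ℝ) 1, ℝ)}
    (hT : ∀ n : ℕ, ∀ i : Fin n, ∀ k : ℕ, k < tn n → ∀ s : Icc (0 : ℝ) 1,
      (k : ℝ) / tn n ≤ (s : ℝ) → (s : ℝ) ≤ ((k : ℝ) + 1) / tn n →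
      T n i s = (tn n : ℝ) * ((((k : ℝ) + 1) / tn n - (s : ℝ)) * gridPoint n (σ n k i) +
        ((s : ℝ) - (k : ℝ) / tn n) * gridPoint n (σ n (k + 1) i)))
    {t : ℝ} (ht : t ∈ Icc (0 : ℝ) 1) :
    ∀ δ > 0, ∀ᶠ n in atTop, ∃ s ∈ Metric.closedBall ⟨t, ht⟩ δ, IsPermutationAt (T n) s := by
  intro δ hδ
  filter_upwards [htn.eventually_ge_atTop ⌈δ⁻¹⌉₊, htn.eventually_gt_atTop 0] with n hfine hpos
  have hpos' : (0 : ℝ) < tn n := Nat.cast_pos.2 hpos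
  obtain ⟨k, hk, hnear⟩ := exists_nat_div_near ht hpos
  have hmem : (k : ℝ) / tn n ∈ Icc (0 : ℝ) 1 :=
    ⟨by positivity, div_le_one_of_le₀ (Nat.cast_le.2 hk.le) hpos'.le⟩
  refine ⟨⟨_, hmem⟩, ?_, isPermutationAt_of_interpolation (hT n) hk _ rfl⟩
  rw [Metric.mem_closedBall, Subtype.dist_eq, Real.dist_eq]
  refine hnear.trans ?_
  rw [div_le_iff₀ hpos', ← div_le_iff₀' hδ, one_div]
  exact (Nat.le_ceil _).trans (Nat.cast_le.2 hfine)

theorem limit_of_permutation_processes_is_permuton_process_general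
    {Ω : Type*} [MeasurableSpace Ω] (P : Measure Ω) [IsProbabilityMeasure P]
    (tn : ℕ → ℕ) (htn : Tendsto tn atTop atTop)
    (σ : (n : ℕ) → ℕ → Equiv.Perm (Fin n))
    (T : (n : ℕ) → Fin n → C(Icc (0:ℝ) 1, ℝ))
    (hT : ∀ n : ℕ, ∀ i : Fin n, ∀ k : ℕ, k < tn n → ∀ s : Icc (0:ℝ) 1,
      (k : ℝ) / tn n ≤ (s : ℝ) → (s : ℝ) ≤ ((k : ℝ) + 1) / tn n →
      T n i s = (tn n : ℝ) *
        ((((k : ℝ) + 1) / tn n - (s : ℝ)) * (2 * (((σ n k i : ℕ) : ℝ) + 1) / n - 1) +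
          ((s : ℝ) - (k : ℝ) / tn n) * (2 * (((σ n (k + 1) i : ℕ) : ℝ) + 1) / n - 1)))
    (X : ℝ → Ω → ℝ)
    (hXcont : ∀ ω, Continuous fun s : Icc (0:ℝ) 1 => X (s : ℝ) ω)
    (hXmeas : ∀ t ∈ Icc (0:ℝ) 1, Measurable (X t))
    (hconv : ∀ F : C(Icc (0:ℝ) 1, ℝ) → ℝ, UniformContinuous F → (∃ M : ℝ, ∀ f, |F f| ≤ M) →
      Tendsto (fun n : ℕ => (1 / (n : ℝ)) * ∑ i : Fin n, F (T n i)) atTop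
        (𝓝 (∫ ω, F ⟨fun s : Icc (0:ℝ) 1 => X (s : ℝ) ω, hXcont ω⟩ ∂P))) :
    ∀ t ∈ Icc (0:ℝ) 1, P.map (X t) = unif := by
  intro t ht
  have hXt : AEMeasurable (X t) P := (hXmeas t ht).aemeasurable
  have := Measure.isProbabilityMeasure_map hXt
  refine Measure.ext_of_forall_lipschitz_integral_eq fun g ⟨C, hC⟩ ⟨L, hg⟩ => ?_
  rw [integral_map hXt hg.continuous.aestronglyMeasurable]
  exact integral_eval_eq_integral_unif (Y := fun ω => ⟨fun s : Icc (0 : ℝ) 1 => X s ω, hXcont ω⟩)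
    (fun s => hXmeas s s.2) hconv (eventually_exists_isPermutationAt htn hT ht) hg hC

/-- a weak limit of the trajectory processes of permutation processes
(with lengths tₙ → ∞) is a permuton process: X(t) ~ Uniform[-1,1] for every t ∈ [0,1]. -/
theorem limit_of_permutation_processes_is_permuton_process
    {Ω : Type*} [MeasurableSpace Ω] (P : Measure Ω) [IsProbabilityMeasure P]
    (tn : ℕ → ℕ) (htn : Tendsto tn atTop atTop)
    (σ : (n : ℕ) → ℕ → Equiv.Perm (Fin n)) (hσ0 : ∀ n, σ n 0 = 1)
    (T : (n : ℕ) → Fin n → C(Icc (0:ℝ) 1, ℝ))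
    (hT : ∀ n : ℕ, ∀ i : Fin n, ∀ k : ℕ, k < tn n → ∀ s : Icc (0:ℝ) 1,
      (k : ℝ) / tn n ≤ (s : ℝ) → (s : ℝ) ≤ ((k : ℝ) + 1) / tn n →
      T n i s = (tn n : ℝ) *
        ((((k : ℝ) + 1) / tn n - (s : ℝ)) * (2 * (((σ n k i : ℕ) : ℝ) + 1) / n - 1) +
          ((s : ℝ) - (k : ℝ) / tn n) * (2 * (((σ n (k + 1) i : ℕ) : ℝ) + 1) / n - 1)))
    (X : ℝ → Ω → ℝ)
    (hXcont : ∀ ω, Continuous fun s : Icc (0:ℝ) 1 => X (s : ℝ) ω)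
    (hXmeas : ∀ t ∈ Icc (0:ℝ) 1, Measurable (X t))
    (hconv : ∀ F : C(Icc (0:ℝ) 1, ℝ) → ℝ, UniformContinuous F → (∃ M : ℝ, ∀ f, |F f| ≤ M) →
      Tendsto (fun n : ℕ => (1 / (n : ℝ)) * ∑ i : Fin n, F (T n i)) atTop
        (𝓝 (∫ ω, F ⟨fun s : Icc (0:ℝ) 1 => X (s : ℝ) ω, hXcont ω⟩ ∂P))) :
    ∀ t ∈ Icc (0:ℝ) 1, P.map (X t) = unif :=
  limit_of_permutation_processes_is_permuton_process_general P tn htn σ T hT X hXcont hXmeas hconv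
end

section
/- Let X = (X(t); 0 ≤ t ≤ 1) be a permuton process satisfying X(1) = −X(0) almost surely. Then the energy of X satisfies E(X) ≥ π²/3, where E(X) = sup_Π Σ_{i=1}^k E[|X(t_i) − X(t_{i−1})|²]/(t_i − t_{i−1}), the supremum taken over all finite partitions Π = {0 = t_0 < t_1 < ⋯ < t_k = 1} of [0,1]. -/
open MeasureTheory Set Filter
open scoped ENNReal Real Topology

/-- `t 0 = 0 < t 1 < ... < t k = 1` is a finite partition of [0,1]. -/
def IsPartition (k : ℕ) (t : ℕ → ℝ) : Prop :=
  0 < k ∧ t 0 = 0 ∧ t k = 1 ∧ ∀ i < k, t i < t (i + 1)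

/-- The energy of a path along partitions of [0,1], expressed in terms of the
squared-distance function `D s t` between the points `γ s` and `γ t` of the path:
`E = sup_Π Σ_i d(γ(t_i),γ(t_{i-1}))² / (t_i - t_{i-1})`. -/
noncomputable def energyOf (D : ℝ → ℝ → ℝ) : ℝ≥0∞ :=
  ⨆ (k : ℕ) (t : ℕ → ℝ) (_ : IsPartition k t),
    ENNReal.ofReal (∑ i ∈ Finset.range k, D (t i) (t (i + 1)) / (t (i + 1) - t i))

/-!
In `L²(P)` the process is a curve `t ↦ X t`, continuous by dominated convergence, lying on the
sphere of radius `r = 1/√3` (every `X t` has second moment `1/3`) and joining two antipodal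
points. By Cauchy–Schwarz the energy along a partition dominates the squared length of the
inscribed polygon. On a fine partition each chord is almost `r` times the angle it subtends, and
by the triangle inequality for angles these angles add up to at least `π`, the angle between the
endpoints. Hence the energy is at least `(π r)² = π²/3`.
-/

open InnerProductGeometry

namespace IsPartition

variable {k : ℕ} {t : ℕ → ℝ}

lemma sum_sub (h : IsPartition k t) : ∑ i ∈ Finset.range k, (t (i + 1) - t i) = 1 := by
  rw [Finset.sum_range_sub, h.2.2.1, h.2.1, sub_zero]

lemma mem_Icc (h : IsPartition k t) {i : ℕ} (hi : i ≤ k) : t i ∈ Icc 0 1 := by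
  have mono : ∀ i j, i ≤ j → j ≤ k → t i ≤ t j := by
    intro i j hij hjk
    induction j, hij using Nat.le_induction with
    | base => rfl
    | succ j _ ih => exact (ih (by omega)).trans (h.2.2.2 j (by omega)).le
  rw [← h.2.1, ← h.2.2.1]
  exact ⟨mono 0 i (Nat.zero_le i) hi, mono i k hi le_rfl⟩

lemma sq_sum_le_sum_sq_div (h : IsPartition k t) (f : ℕ → ℝ) :
    (∑ i ∈ Finset.range k, f i) ^ 2 ≤ ∑ i ∈ Finset.range k, f i ^ 2 / (t (i + 1) - t i) := by
  simpa [h.sum_sub] using Finset.sq_sum_div_le_sum_sq_div (Finset.range k) f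
    fun i hi ↦ sub_pos.2 (h.2.2.2 i (Finset.mem_range.1 hi))

end IsPartition

lemma isPartition_div_nat {k : ℕ} (hk : 0 < k) : IsPartition k fun i ↦ (i : ℝ) / k := by
  have hk' : (0 : ℝ) < k := Nat.cast_pos.2 hk
  refine ⟨hk, by simp, div_self hk'.ne', fun i _ ↦ ?_⟩
  push_cast
  gcongr
  exact lt_add_one _

lemma ofReal_sum_le_energyOf {D : ℝ → ℝ → ℝ} {k : ℕ} {t : ℕ → ℝ} (h : IsPartition k t) :
    ENNReal.ofReal (∑ i ∈ Finset.range k, D (t i) (t (i + 1)) / (t (i + 1) - t i)) ≤ energyOf D :=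
  le_iSup₂_of_le k t (le_iSup_of_le h le_rfl)

lemma ofReal_sq_sum_norm_sub_le_energyOf {F : Type*} [SeminormedAddCommGroup F] {γ : ℝ → F}
    {k : ℕ} {t : ℕ → ℝ} (h : IsPartition k t) :
    ENNReal.ofReal ((∑ i ∈ Finset.range k, ‖γ (t (i + 1)) - γ (t i)‖) ^ 2) ≤
      energyOf fun s t ↦ ‖γ t - γ s‖ ^ 2 :=
  (ENNReal.ofReal_le_ofReal (h.sq_sum_le_sum_sq_div _)).trans (ofReal_sum_le_energyOf h)

lemma energyOf_congr {D D' : ℝ → ℝ → ℝ}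
    (h : ∀ s ∈ Icc (0 : ℝ) 1, ∀ t ∈ Icc (0 : ℝ) 1, D s t = D' s t) :
    energyOf D = energyOf D' := by
  refine iSup_congr fun k ↦ iSup_congr fun t ↦ iSup_congr fun ht ↦ ?_
  refine congrArg _ (Finset.sum_congr rfl fun i hi ↦ ?_)
  have hi := Finset.mem_range.1 hi
  rw [h _ (ht.mem_Icc hi.le) _ (ht.mem_Icc hi)]

lemma ContinuousOn.exists_dist_div_nat_lt {α : Type*} [PseudoMetricSpace α] {γ : ℝ → α}
    (hγ : ContinuousOn γ (Icc 0 1)) {ε : ℝ} (hε : 0 < ε) :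
    ∃ k : ℕ, 0 < k ∧ ∀ i < k, dist (γ (↑(i + 1) / k)) (γ (i / k)) < ε := by
  obtain ⟨η, hη, hγη⟩ :=
    Metric.uniformContinuousOn_iff.1 (isCompact_Icc.uniformContinuousOn_of_continuous hγ) ε hε
  obtain ⟨n, hn⟩ := exists_nat_one_div_lt hη
  have hpart := isPartition_div_nat n.succ_pos
  refine ⟨n + 1, n.succ_pos, fun i hi ↦ hγη _ (hpart.mem_Icc hi) _ (hpart.mem_Icc hi.le) ?_⟩
  rw [Real.dist_eq, ← sub_div]
  push_cast
  rwa [add_sub_cancel_left, abs_of_pos (by positivity)]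

lemma Real.sq_mul_sq_le_two_mul_one_sub_cos {c θ : ℝ} (hθ : θ ^ 2 ≤ 1 - c ^ 2) :
    c ^ 2 * θ ^ 2 ≤ 2 * (1 - Real.cos θ) := by
  have hθ1 : |θ| ≤ 1 := abs_le_one_iff_mul_self_le_one.2 (by nlinarith [sq_nonneg c])
  have hcos := (abs_le.1 (Real.cos_bound hθ1)).2
  rw [show |θ| ^ 4 = θ ^ 2 * θ ^ 2 by rw [pow_abs, abs_of_nonneg (by positivity)]; ring] at hcos
  nlinarith [sq_nonneg θ, mul_le_mul_of_nonneg_left hθ (sq_nonneg θ)]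

section InnerProductSpace

variable {E : Type*} [NormedAddCommGroup E] [InnerProductSpace ℝ E]

lemma norm_sub_sq_eq_of_norm_eq {a b : E} {r : ℝ} (ha : ‖a‖ = r) (hb : ‖b‖ = r) :
    ‖a - b‖ ^ 2 = 2 * r ^ 2 * (1 - Real.cos (angle a b)) := by
  rw [sq, norm_sub_sq_eq_norm_sq_add_norm_sq_sub_two_mul_norm_mul_norm_mul_cos_angle, ha, hb]
  ring

lemma two_mul_angle_le_pi_mul_norm_sub {a b : E} {r : ℝ} (ha : ‖a‖ = r) (hb : ‖b‖ = r) :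
    2 * r * angle a b ≤ π * ‖a - b‖ := by
  have hr : 0 ≤ r := ha ▸ norm_nonneg a
  have hcos := Real.cos_le_one_sub_mul_cos_sq
    (abs_le.2 ⟨by linarith [angle_nonneg a b, Real.pi_pos], angle_le_pi a b⟩)
  refine le_of_pow_le_pow_left₀ two_ne_zero (by positivity) ?_
  rw [mul_pow π, norm_sub_sq_eq_of_norm_eq ha hb]
  have : 0 < π ^ 2 := by positivity
  field_simp at hcos
  nlinarith [sq_nonneg r]

lemma mul_mul_angle_le_norm_sub {a b : E} {r c : ℝ} (ha : ‖a‖ = r) (hb : ‖b‖ = r)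
    (hθ : angle a b ^ 2 ≤ 1 - c ^ 2) : c * r * angle a b ≤ ‖a - b‖ := by
  have hr : 0 ≤ r := ha ▸ norm_nonneg a
  refine le_of_pow_le_pow_left₀ two_ne_zero (norm_nonneg _) ?_
  rw [norm_sub_sq_eq_of_norm_eq ha hb]
  nlinarith [Real.sq_mul_sq_le_two_mul_one_sub_cos hθ, sq_nonneg r]

lemma angle_le_sum_angle (v : ℕ → E) (n : ℕ) :
    angle (v 0) (v (n + 1)) ≤ ∑ i ∈ Finset.range (n + 1), angle (v i) (v (i + 1)) := by
  induction n with
  | zero => simp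
  | succ n ih =>
    rw [Finset.sum_range_succ]
    exact (angle_le_angle_add_angle _ (v (n + 1)) _).trans (by gcongr)

lemma exists_isPartition_mul_pi_le_sum_norm_sub {γ : ℝ → E} {r c : ℝ}
    (hγ : ContinuousOn γ (Icc 0 1)) (hnorm : ∀ t ∈ Icc (0 : ℝ) 1, ‖γ t‖ = r)
    (hanti : γ 1 = -γ 0) (hr : 0 < r) (hc0 : 0 ≤ c) (hc1 : c < 1) :
    ∃ k t, IsPartition k t ∧
      c * π * r ≤ ∑ i ∈ Finset.range k, ‖γ (t (i + 1)) - γ (t i)‖ := by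
  have hη : 0 < 2 * r * √(1 - c ^ 2) / π := by
    have := Real.sqrt_pos.2 (by nlinarith : 0 < 1 - c ^ 2)
    positivity
  obtain ⟨k, hk, hmesh⟩ := hγ.exists_dist_div_nat_lt hη
  set t : ℕ → ℝ := fun i ↦ (i : ℝ) / k
  have hpart : IsPartition k t := isPartition_div_nat hk
  set θ : ℕ → ℝ := fun i ↦ angle (γ (t i)) (γ (t (i + 1)))
  have hθ : ∀ i < k, c * r * θ i ≤ ‖γ (t (i + 1)) - γ (t i)‖ := by
    intro i hi
    have ha := hnorm _ (hpart.mem_Icc hi.le)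
    have hb := hnorm _ (hpart.mem_Icc hi)
    rw [norm_sub_rev]
    -- the Jordan-type bound `2 r θ ≤ π ‖b - a‖` turns the mesh bound into `θ i < √(1 - c²)`
    refine mul_mul_angle_le_norm_sub ha hb ((Real.lt_sqrt (angle_nonneg _ _)).1 ?_).le
    have hjordan := two_mul_angle_le_pi_mul_norm_sub ha hb
    have hsmall := hmesh i hi
    rw [dist_eq_norm, norm_sub_rev, lt_div_iff₀ Real.pi_pos] at hsmall
    nlinarith
  have hπ : π ≤ ∑ i ∈ Finset.range k, θ i := by
    obtain ⟨n, rfl⟩ := Nat.exists_eq_add_one_of_ne_zero hk.ne'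
    have hγ0 : γ 0 ≠ 0 := norm_pos_iff.1 (hnorm 0 ⟨le_rfl, zero_le_one⟩ ▸ hr)
    have h := angle_le_sum_angle (fun i ↦ γ (t i)) n
    rwa [hpart.2.1, hpart.2.2.1, hanti, angle_self_neg_of_nonzero hγ0] at h
  refine ⟨k, t, hpart, ?_⟩
  calc c * π * r = c * r * π := by ring
    _ ≤ c * r * ∑ i ∈ Finset.range k, θ i := by gcongr
    _ ≤ _ := by
      rw [Finset.mul_sum]
      exact Finset.sum_le_sum fun i hi ↦ hθ i (Finset.mem_range.1 hi)

lemma sq_mul_pi_mul_le_energyOf {γ : ℝ → E} {r c : ℝ} (hγ : ContinuousOn γ (Icc 0 1))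
    (hnorm : ∀ t ∈ Icc (0 : ℝ) 1, ‖γ t‖ = r) (hanti : γ 1 = -γ 0) (hc0 : 0 ≤ c) (hc1 : c < 1) :
    ENNReal.ofReal ((c * π * r) ^ 2) ≤ energyOf fun s t ↦ ‖γ t - γ s‖ ^ 2 := by
  obtain hr | hr := (hnorm 0 ⟨le_rfl, zero_le_one⟩ ▸ norm_nonneg (γ 0)).eq_or_lt
  · simp [← hr]
  obtain ⟨k, t, hpart, hlength⟩ :=
    exists_isPartition_mul_pi_le_sum_norm_sub hγ hnorm hanti hr hc0 hc1
  exact (ENNReal.ofReal_le_ofReal (by gcongr)).trans (ofReal_sq_sum_norm_sub_le_energyOf hpart)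

theorem sq_pi_mul_le_energyOf {γ : ℝ → E} {r : ℝ} (hγ : ContinuousOn γ (Icc 0 1))
    (hnorm : ∀ t ∈ Icc (0 : ℝ) 1, ‖γ t‖ = r) (hanti : γ 1 = -γ 0) :
    ENNReal.ofReal ((π * r) ^ 2) ≤ energyOf fun s t ↦ ‖γ t - γ s‖ ^ 2 := by
  have hlim : Tendsto (fun c : ℝ ↦ ENNReal.ofReal ((c * π * r) ^ 2)) (𝓝[<] 1)
      (𝓝 (ENNReal.ofReal ((π * r) ^ 2))) := by
    have : Continuous fun c : ℝ ↦ ENNReal.ofReal ((c * π * r) ^ 2) :=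
      ENNReal.continuous_ofReal.comp (by fun_prop)
    simpa using (this.tendsto 1).mono_left nhdsWithin_le_nhds
  refine le_of_tendsto hlim ?_
  filter_upwards [Ioo_mem_nhdsLT zero_lt_one] with c hc
  exact sq_mul_pi_mul_le_energyOf hγ hnorm hanti hc.1.le hc.2

end InnerProductSpace

section Lp

variable {Ω : Type*} [MeasurableSpace Ω] {P : Measure Ω}

lemma norm_toLp_sq {f : Ω → ℝ} (hf : MemLp f 2 P) : ‖hf.toLp f‖ ^ 2 = ∫ ω, f ω ^ 2 ∂P := by
  rw [← real_inner_self_eq_norm_sq, L2.inner_def]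
  refine integral_congr_ae ?_
  filter_upwards [hf.coeFn_toLp] with ω hω
  simp [hω, sq]

open Classical in
noncomputable def lpCurve (P : Measure Ω) (X : ℝ → Ω → ℝ) (t : ℝ) : Lp ℝ 2 P :=
  if h : MemLp (X t) 2 P then h.toLp (X t) else 0

variable {X : ℝ → Ω → ℝ}

lemma lpCurve_of_memLp {t : ℝ} (h : MemLp (X t) 2 P) : lpCurve P X t = h.toLp (X t) :=
  dif_pos h

lemma norm_lpCurve_sq {t : ℝ} (h : MemLp (X t) 2 P) :
    ‖lpCurve P X t‖ ^ 2 = ∫ ω, X t ω ^ 2 ∂P := by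
  rw [lpCurve_of_memLp h, norm_toLp_sq]

lemma norm_lpCurve_sub_sq {s t : ℝ} (hs : MemLp (X s) 2 P) (ht : MemLp (X t) 2 P) :
    ‖lpCurve P X t - lpCurve P X s‖ ^ 2 = ∫ ω, (X t ω - X s ω) ^ 2 ∂P := by
  rw [lpCurve_of_memLp hs, lpCurve_of_memLp ht, ← MemLp.toLp_sub, norm_toLp_sq]
  rfl

lemma continuousOn_lpCurve [IsFiniteMeasure P] {s : Set ℝ} {C : ℝ}
    (hmeas : ∀ t ∈ s, AEStronglyMeasurable (X t) P) (hbd : ∀ t ∈ s, ∀ ω, ‖X t ω‖ ≤ C)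
    (hcont : ∀ᵐ ω ∂P, ContinuousOn (fun t ↦ X t ω) s) : ContinuousOn (lpCurve P X) s := by
  have hmem : ∀ t ∈ s, MemLp (X t) 2 P := fun t ht ↦
    MemLp.of_bound (hmeas t ht) C (ae_of_all _ (hbd t ht))
  intro t₀ ht₀
  have hint : ContinuousWithinAt (fun t ↦ ∫ ω, (X t ω - X t₀ ω) ^ 2 ∂P) s t₀ := by
    refine continuousWithinAt_of_dominated (bound := fun _ ↦ (2 * C) ^ 2)
      (eventually_mem_nhdsWithin.mono fun t ht ↦ ((hmeas t ht).sub (hmeas t₀ ht₀)).pow 2)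
      (eventually_mem_nhdsWithin.mono fun t ht ↦ ae_of_all _ fun ω ↦ ?_)
      (integrable_const _)
      (hcont.mono fun ω hω ↦ ((hω t₀ ht₀).sub continuousWithinAt_const).pow 2)
    rw [Real.norm_eq_abs, abs_pow]
    have := abs_sub (X t ω) (X t₀ ω)
    gcongr
    linarith [hbd t ht ω, hbd t₀ ht₀ ω, Real.norm_eq_abs (X t ω), Real.norm_eq_abs (X t₀ ω)]
  rw [ContinuousWithinAt, tendsto_iff_norm_sub_tendsto_zero]
  have hlim : Tendsto (fun t ↦ √(∫ ω, (X t ω - X t₀ ω) ^ 2 ∂P)) (𝓝[s] t₀) (𝓝 0) := by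
    simpa [ContinuousWithinAt] using hint.sqrt
  refine hlim.congr' ?_
  filter_upwards [eventually_mem_nhdsWithin] with t ht
  rw [← norm_lpCurve_sub_sq (hmem t₀ ht₀) (hmem t ht), Real.sqrt_sq (norm_nonneg _)]

end Lp

instance inst_s2 : IsProbabilityMeasure unif := by
  refine ⟨?_⟩
  rw [unif, Measure.smul_apply, Measure.restrict_apply_univ, Real.volume_Icc]
  norm_num [ENNReal.inv_mul_cancel]

lemma integral_sq_unif : ∫ x, x ^ 2 ∂unif = 1 / 3 := by
  rw [unif, integral_smul_measure, integral_Icc_eq_integral_Ioc,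
    ← intervalIntegral.integral_of_le (by norm_num : (-1 : ℝ) ≤ 1), integral_pow]
  norm_num [ENNReal.toReal_inv]

lemma integral_sq_of_map_eq_unif {Ω : Type*} [MeasurableSpace Ω] {P : Measure Ω} {Y : Ω → ℝ}
    (hY : AEMeasurable Y P) (h : P.map Y = unif) : ∫ ω, Y ω ^ 2 ∂P = 1 / 3 := by
  rw [← integral_sq_unif, ← h, integral_map hY (by fun_prop)]

/-- any permuton process X with X(1) = -X(0) a.s. has energy at least π²/3. -/
theorem permuton_process_energy_ge
    {Ω : Type*} [MeasurableSpace Ω] (P : Measure Ω) [IsProbabilityMeasure P]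
    (X : ℝ → Ω → ℝ)
    (hcont : ∀ ω, ContinuousOn (fun t => X t ω) (Icc 0 1))
    (hval : ∀ t ∈ Icc (0:ℝ) 1, ∀ ω, X t ω ∈ Icc (-1 : ℝ) 1)
    (hunif : ∀ t ∈ Icc (0:ℝ) 1, P.map (X t) = unif)
    (hrev : ∀ᵐ ω ∂P, X 1 ω = -X 0 ω) :
    ENNReal.ofReal (π ^ 2 / 3) ≤
      energyOf (fun s t => ∫ ω, (X t ω - X s ω) ^ 2 ∂P) := by
  have hmeas : ∀ t ∈ Icc (0 : ℝ) 1, AEMeasurable (X t) P := fun t ht ↦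
    .of_map_ne_zero (hunif t ht ▸ IsProbabilityMeasure.ne_zero unif)
  have hbd : ∀ t ∈ Icc (0 : ℝ) 1, ∀ ω, ‖X t ω‖ ≤ 1 := fun t ht ω ↦
    (Real.norm_eq_abs _).trans_le (abs_le.2 (hval t ht ω))
  have hmem : ∀ t ∈ Icc (0 : ℝ) 1, MemLp (X t) 2 P := fun t ht ↦
    .of_bound (hmeas t ht).aestronglyMeasurable 1 (ae_of_all _ (hbd t ht))
  have hnorm : ∀ t ∈ Icc (0 : ℝ) 1, ‖lpCurve P X t‖ = √(1 / 3) := fun t ht ↦ by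
    rw [← integral_sq_of_map_eq_unif (hmeas t ht) (hunif t ht), ← norm_lpCurve_sq (hmem t ht),
      Real.sqrt_sq (norm_nonneg _)]
  have h0 : (0 : ℝ) ∈ Icc (0 : ℝ) 1 := ⟨le_rfl, zero_le_one⟩
  have h1 : (1 : ℝ) ∈ Icc (0 : ℝ) 1 := ⟨zero_le_one, le_rfl⟩
  have hanti : lpCurve P X 1 = -lpCurve P X 0 := by
    rw [lpCurve_of_memLp (hmem 1 h1), lpCurve_of_memLp (hmem 0 h0), ← MemLp.toLp_neg]
    exact MemLp.toLp_congr _ _ hrev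
  calc ENNReal.ofReal (π ^ 2 / 3) = ENNReal.ofReal ((π * √(1 / 3)) ^ 2) := by
        rw [mul_pow, Real.sq_sqrt (by norm_num)]
        ring_nf
    _ ≤ energyOf fun s t ↦ ‖lpCurve P X t - lpCurve P X s‖ ^ 2 :=
        sq_pi_mul_le_energyOf
          (continuousOn_lpCurve (fun t ht ↦ (hmeas t ht).aestronglyMeasurable) hbd
            (ae_of_all _ hcont)) hnorm hanti
    _ = _ := energyOf_congr fun s hs t ht ↦ norm_lpCurve_sub_sq (hmem s hs) (hmem t ht)
end

section
/- Let P be a permuton satisfying the plank property. Then there exists a path γ = (γ(t); 0 ≤ t ≤ 1) in the space of permutons with γ(0) = id and γ(1) = P that is Lipschitz with respect to the 2-Wasserstein metric, i.e. there is a constant C with W₂(γ(t), γ(s)) ≤ C·|t − s| for all s, t ∈ [0,1]; in particular γ has finite energy. -/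
open MeasureTheory Set Filter
open scoped ENNReal Real Topology

/-- Optimal transportation cost between two measures for the cost `c`. -/
noncomputable def W2sqCost {K : Type*} [MeasurableSpace K] (c : K × K → ℝ)
    (μ ν : Measure K) : ℝ :=
  sInf {e | ∃ m : Measure (K × K), IsProbabilityMeasure m ∧
    m.map Prod.fst = μ ∧ m.map Prod.snd = ν ∧ e = ∫ p, c p ∂m}

/-- The squared 2-Wasserstein distance between measures on the plane,
with the Euclidean metric: `W₂(μ,ν)² = inf over couplings of E[‖V-W‖²]`. -/
noncomputable def W2sqE (μ ν : Measure (ℝ × ℝ)) : ℝ :=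
  W2sqCost (fun p => (p.1.1 - p.2.1) ^ 2 + (p.1.2 - p.2.2) ^ 2) μ ν

/-- A permuton: a Borel probability measure on the plane whose coordinate marginals
are uniform on [-1,1]. -/
def IsPermuton (μ : Measure (ℝ × ℝ)) : Prop :=
  IsProbabilityMeasure μ ∧ μ.map Prod.fst = unif ∧ μ.map Prod.snd = unif

/-- The identity permuton, the law of (X, X) with X ~ Uniform[-1,1]. -/
noncomputable def idPermuton : Measure (ℝ × ℝ) := unif.map (fun x => (x, x))

/-- The reverse permuton, the law of (X, -X) with X ~ Uniform[-1,1]. -/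
noncomputable def revPermuton : Measure (ℝ × ℝ) := unif.map (fun x => (x, -x))

/-- The plank of slope θ between levels a and b:
`{(x,y) ∈ [-1,1]² : a ≤ cos(θ+π/2)x + sin(θ+π/2)y ≤ b}`. -/
def plank (θ a b : ℝ) : Set (ℝ × ℝ) :=
  {p | p.1 ∈ Icc (-1 : ℝ) 1 ∧ p.2 ∈ Icc (-1 : ℝ) 1 ∧
    a ≤ Real.cos (θ + π / 2) * p.1 + Real.sin (θ + π / 2) * p.2 ∧
    Real.cos (θ + π / 2) * p.1 + Real.sin (θ + π / 2) * p.2 ≤ b}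

/-- The plank property: the mass of every negatively sloped plank (or alternatively of
every positively sloped plank) is bounded by a constant times its width. -/
def HasPlankProperty (μ : Measure (ℝ × ℝ)) : Prop :=
  (∃ C : ℝ, ∀ θ a b : ℝ, -(π / 2) ≤ θ → θ ≤ 0 → a ≤ b →
      (μ (plank θ a b)).toReal ≤ C * (b - a)) ∨
  (∃ C : ℝ, ∀ θ a b : ℝ, 0 ≤ θ → θ < π / 2 → a ≤ b →
      (μ (plank θ a b)).toReal ≤ C * (b - a))

section Aux

lemma unif_apply {S : Set ℝ} (hS : MeasurableSet S) :
    unif S = 2⁻¹ * volume (S ∩ Icc (-1 : ℝ) 1) := by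
  simp [unif, Measure.restrict_apply hS]

lemma ofReal_half_mul (a : ℝ) : (2:ℝ≥0∞)⁻¹ * ENNReal.ofReal a = ENNReal.ofReal (a / 2) := by
  rw [div_eq_mul_inv, ENNReal.ofReal_mul' (by norm_num)]
  rw [show ((2:ℝ)⁻¹) = (2:ℝ≥0∞)⁻¹.toReal by norm_num]
  rw [ENNReal.ofReal_toReal (by norm_num)]
  ring

instance unif_prob : IsProbabilityMeasure unif := by
  constructor
  rw [unif_apply MeasurableSet.univ]
  simp only [Set.univ_inter, Real.volume_Icc]
  rw [ofReal_half_mul]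
  norm_num

lemma unif_Iic (y : ℝ) : unif (Iic y) = ENNReal.ofReal ((min y 1 + 1) / 2) := by
  rw [unif_apply measurableSet_Iic]
  have : Iic y ∩ Icc (-1 : ℝ) 1 = Icc (-1) (min y 1) := by
    ext x; simp only [mem_inter_iff, mem_Iic, mem_Icc, le_min_iff]
    constructor
    · rintro ⟨h1, h2, h3⟩; exact ⟨h2, h1, h3⟩
    · rintro ⟨h1, h2, h3⟩; exact ⟨h2, h1, h3⟩
  rw [this, Real.volume_Icc, ofReal_half_mul]
  ring_nf

lemma unif_Ici (c : ℝ) : unif (Ici c) = ENNReal.ofReal ((1 - max c (-1)) / 2) := by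
  rw [unif_apply measurableSet_Ici]
  have : Ici c ∩ Icc (-1 : ℝ) 1 = Icc (max c (-1)) 1 := by
    ext x; simp only [mem_inter_iff, mem_Ici, mem_Icc, max_le_iff]
    constructor
    · rintro ⟨h1, h2, h3⟩; exact ⟨⟨h1, h2⟩, h3⟩
    · rintro ⟨⟨h1, h2⟩, h3⟩; exact ⟨h1, h2, h3⟩
  rw [this, Real.volume_Icc, ofReal_half_mul]


section PermutonFacts

variable {P : Measure (ℝ × ℝ)} (hP : IsPermuton P)

lemma permuton_box (hP : IsPermuton P) :
    ∀ᵐ p ∂P, p.1 ∈ Icc (-1:ℝ) 1 ∧ p.2 ∈ Icc (-1:ℝ) 1 := by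
  have h1 : P {p : ℝ × ℝ | p.1 ∉ Icc (-1:ℝ) 1} = 0 := by
    have : P {p : ℝ × ℝ | p.1 ∉ Icc (-1:ℝ) 1} = (P.map Prod.fst) (Icc (-1:ℝ) 1)ᶜ := by
      rw [Measure.map_apply measurable_fst (measurableSet_Icc.compl)]
      rfl
    rw [this, hP.2.1]
    rw [unif_apply measurableSet_Icc.compl]
    simp
  have h2 : P {p : ℝ × ℝ | p.2 ∉ Icc (-1:ℝ) 1} = 0 := by
    have : P {p : ℝ × ℝ | p.2 ∉ Icc (-1:ℝ) 1} = (P.map Prod.snd) (Icc (-1:ℝ) 1)ᶜ := by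
      rw [Measure.map_apply measurable_snd (measurableSet_Icc.compl)]
      rfl
    rw [this, hP.2.2]
    rw [unif_apply measurableSet_Icc.compl]
    simp
  have := measure_union_null h1 h2
  rw [ae_iff]
  refine measure_mono_null ?_ this
  intro p hp
  simp only [mem_setOf_eq, not_and_or] at hp ⊢
  tauto

lemma permuton_fst_Iic (hP : IsPermuton P) {z : ℝ} (h1 : -1 ≤ z) (h2 : z ≤ 1) :
    (P {p : ℝ × ℝ | p.1 ≤ z}).toReal = (z + 1) / 2 := by
  have : P {p : ℝ × ℝ | p.1 ≤ z} = (P.map Prod.fst) (Iic z) := by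
    rw [Measure.map_apply measurable_fst measurableSet_Iic]; rfl
  rw [this, hP.2.1, unif_Iic, min_eq_left h2, ENNReal.toReal_ofReal (by linarith)]

lemma permuton_snd_Iic (hP : IsPermuton P) {z : ℝ} (h1 : -1 ≤ z) (h2 : z ≤ 1) :
    (P {p : ℝ × ℝ | p.2 ≤ z}).toReal = (z + 1) / 2 := by
  have : P {p : ℝ × ℝ | p.2 ≤ z} = (P.map Prod.snd) (Iic z) := by
    rw [Measure.map_apply measurable_snd measurableSet_Iic]; rfl
  rw [this, hP.2.2, unif_Iic, min_eq_left h2, ENNReal.toReal_ofReal (by linarith)]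

lemma permuton_fst_Ici (hP : IsPermuton P) {z : ℝ} (h1 : -1 ≤ z) (h2 : z ≤ 1) :
    (P {p : ℝ × ℝ | z ≤ p.1}).toReal = (1 - z) / 2 := by
  have : P {p : ℝ × ℝ | z ≤ p.1} = (P.map Prod.fst) (Ici z) := by
    rw [Measure.map_apply measurable_fst measurableSet_Ici]; rfl
  rw [this, hP.2.1, unif_Ici, max_eq_left h1, ENNReal.toReal_ofReal (by linarith)]

end PermutonFacts

section Quantile

/-- If `F` is a continuous CDF of `V` under the probability measure `μ`, going from 0 to 1,
then `2 F(V) - 1` is uniform on `[-1,1]`. -/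
lemma map_quantile_unif (μ : Measure (ℝ × ℝ)) [IsProbabilityMeasure μ] (V : ℝ × ℝ → ℝ)
    (hV : Measurable V) (F : ℝ → ℝ) (hFdef : ∀ z, F z = (μ {p | V p ≤ z}).toReal)
    (hcont : Continuous F) (h0 : F (-3) = 0) (h1 : F 3 = 1) :
    μ.map (fun p => 2 * F (V p) - 1) = unif := by
  have hFmono : Monotone F := by
    intro a b hab
    rw [hFdef a, hFdef b]
    exact ENNReal.toReal_mono (measure_ne_top μ _)
      (measure_mono fun p hp => le_trans hp hab)
  have hFnonneg : ∀ z, 0 ≤ F z := fun z => by rw [hFdef]; exact ENNReal.toReal_nonneg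
  have hFle1 : ∀ z, F z ≤ 1 := by
    intro z
    rw [hFdef]
    rw [show (1:ℝ) = (μ univ).toReal by simp]
    exact ENNReal.toReal_mono (measure_ne_top μ _) (measure_mono (subset_univ _))
  have hFmeas : Measurable F := hFmono.measurable
  have hgmeas : Measurable (fun p => 2 * F (V p) - 1) := by
    exact ((hFmeas.comp hV).const_mul 2).sub_const 1
  refine Measure.ext_of_Iic _ _ (fun y => ?_)
  rw [Measure.map_apply hgmeas measurableSet_Iic]
  have hpre : (fun p => 2 * F (V p) - 1) ⁻¹' (Iic y) = {p | F (V p) ≤ (y + 1) / 2} := by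
    ext p; simp only [mem_preimage, mem_Iic, mem_setOf_eq]; constructor <;> intro h <;> linarith
  rw [hpre, unif_Iic]
  rcases lt_or_ge y (-1) with hy | hy
  · have : {p : ℝ × ℝ | F (V p) ≤ (y + 1) / 2} = ∅ := by
      ext p; simp only [mem_setOf_eq, mem_empty_iff_false, iff_false, not_le]
      calc (y+1)/2 < 0 := by linarith
        _ ≤ F (V p) := hFnonneg _
    rw [this]
    simp only [measure_empty]
    symm
    rw [ENNReal.ofReal_eq_zero]
    have : min y 1 ≤ y := min_le_left _ _
    linarith
  rcases le_or_gt 1 y with hy1 | hy1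
  · have : {p : ℝ × ℝ | F (V p) ≤ (y + 1) / 2} = univ := by
      ext p; simp only [mem_setOf_eq, mem_univ, iff_true]
      calc F (V p) ≤ 1 := hFle1 _
        _ ≤ (y+1)/2 := by linarith
    rw [this, measure_univ, min_eq_right hy1]
    norm_num
  -- main case : -1 ≤ y < 1
  set α : ℝ := (y + 1) / 2 with hα
  have hα0 : 0 ≤ α := by rw [hα]; linarith
  have hα1 : α < 1 := by rw [hα]; linarith
  set A : Set ℝ := {z | F z ≤ α} with hA
  have hAne : A.Nonempty := ⟨-3, by simp only [hA, mem_setOf_eq, h0]; exact hα0⟩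
  have hAbdd : BddAbove A := by
    refine ⟨3, fun z hz => ?_⟩
    by_contra hz3
    push_neg at hz3
    have : F 3 ≤ F z := hFmono hz3.le
    rw [h1] at this
    exact absurd (le_trans this hz) (not_le.mpr hα1)
  have hAclosed : IsClosed A := by
    have : A = F ⁻¹' (Iic α) := rfl
    rw [this]
    exact IsClosed.preimage hcont isClosed_Iic
  set z0 : ℝ := sSup A with hz0
  have hz0mem : z0 ∈ A := hAclosed.csSup_mem hAne hAbdd
  have hFz0le : F z0 ≤ α := hz0mem
  have hFz0ge : α ≤ F z0 := by
    by_contra hlt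
    push_neg at hlt
    have hopen : IsOpen {z | F z < α} := IsOpen.preimage hcont isOpen_Iio
    obtain ⟨ε, hε, hball⟩ := Metric.isOpen_iff.mp hopen z0 hlt
    have hmem : F (z0 + ε / 2) < α := by
      apply hball
      simp only [Metric.mem_ball, Real.dist_eq]
      rw [abs_of_nonneg (by linarith)]
      linarith
    have : z0 + ε / 2 ∈ A := hmem.le
    have := le_csSup hAbdd this
    linarith
  have hFz0 : F z0 = α := le_antisymm hFz0le hFz0ge
  have hset : {p : ℝ × ℝ | F (V p) ≤ α} = {p | V p ≤ z0} := by
    ext p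
    simp only [mem_setOf_eq]
    constructor
    · intro h; exact le_csSup hAbdd h
    · intro h; calc F (V p) ≤ F z0 := hFmono h
        _ = α := hFz0
  rw [hset]
  have hμα : (μ {p | V p ≤ z0}).toReal = α := by rw [← hFdef, hFz0]
  rw [min_eq_left hy1.le, ← hα, ← hμα, ENNReal.ofReal_toReal (measure_ne_top μ _)]


end Quantile

section Build

lemma part_mono {k : ℕ} {t : ℕ → ℝ} (h : ∀ i < k, t i < t (i + 1)) :
    ∀ j ≤ k, ∀ i ≤ j, t i ≤ t j := by
  intro j
  induction j with
  | zero =>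
    intro _ i hi
    have : i = 0 := Nat.le_zero.mp hi
    rw [this]
  | succ n ih =>
    intro hjk i hij
    rcases Nat.lt_succ_iff_lt_or_eq.mp (Nat.lt_succ_of_le hij) with h' | h'
    · exact le_of_lt (lt_of_le_of_lt (ih (by omega) i (by omega)) (h n (by omega)))
    · rw [h']

lemma build_path (P : Measure (ℝ × ℝ)) (hP : IsPermuton P) (g : ℝ → ℝ × ℝ → ℝ) (K : ℝ)
    (hK : 0 ≤ K)
    (hmeas : ∀ u ∈ Icc (0:ℝ) 1, Measurable (g u))
    (hunif : ∀ u ∈ Icc (0:ℝ) 1, P.map (g u) = unif)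
    (hlip : ∀ u ∈ Icc (0:ℝ) 1, ∀ v ∈ Icc (0:ℝ) 1, ∀ᵐ p ∂P, |g u p - g v p| ≤ K * |v - u|)
    (hg0 : (fun p => g 0 p) =ᵐ[P] (fun p : ℝ × ℝ => p.1))
    (hg1 : (fun p => g 1 p) =ᵐ[P] (fun p : ℝ × ℝ => p.2)) :
    ∃ γ : ℝ → Measure (ℝ × ℝ),
      (∀ t ∈ Icc (0:ℝ) 1, IsPermuton (γ t)) ∧
      γ 0 = idPermuton ∧ γ 1 = P ∧
      (∃ C : ℝ, ∀ s ∈ Icc (0:ℝ) 1, ∀ t ∈ Icc (0:ℝ) 1,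
        Real.sqrt (W2sqE (γ s) (γ t)) ≤ C * |t - s|) ∧
      energyOf (fun s t => W2sqE (γ s) (γ t)) ≠ ⊤ := by
  haveI : IsProbabilityMeasure P := hP.1
  have hW2 : ∀ s ∈ Icc (0:ℝ) 1, ∀ t ∈ Icc (0:ℝ) 1,
      W2sqE (P.map (fun p => (p.1, g s p))) (P.map (fun p => (p.1, g t p)))
        ≤ (K * |t - s|) ^ 2 := by
    intro s hs t ht
    set Φ : ℝ × ℝ → (ℝ × ℝ) × (ℝ × ℝ) := fun p => ((p.1, g s p), (p.1, g t p)) with hΦdef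
    have hΦ : Measurable Φ :=
      (measurable_fst.prodMk (hmeas s hs)).prodMk (measurable_fst.prodMk (hmeas t ht))
    haveI : IsProbabilityMeasure (P.map Φ) := Measure.isProbabilityMeasure_map hΦ.aemeasurable
    have hcont : Continuous (fun p : (ℝ × ℝ) × (ℝ × ℝ) =>
        (p.1.1 - p.2.1) ^ 2 + (p.1.2 - p.2.2) ^ 2) := by fun_prop
    have hcost : ∫ p, ((p.1.1 - p.2.1) ^ 2 + (p.1.2 - p.2.2) ^ 2) ∂(P.map Φ)
        = ∫ p, (g s p - g t p) ^ 2 ∂P := by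
      rw [integral_map hΦ.aemeasurable hcont.aestronglyMeasurable]
      refine integral_congr_ae (ae_of_all _ fun p => ?_)
      simp [hΦdef]
    have hb : ∀ᵐ p ∂P, (g s p - g t p) ^ 2 ≤ (K * |t - s|) ^ 2 :=
      (hlip s hs t ht).mono fun p hp => by
        calc (g s p - g t p) ^ 2 = |g s p - g t p| ^ 2 := (sq_abs _).symm
          _ ≤ (K * |t - s|) ^ 2 := by
              apply pow_le_pow_left₀ (abs_nonneg _) hp
    have hint : Integrable (fun p => (g s p - g t p) ^ 2) P := by
      refine Integrable.mono' (integrable_const ((K * |t - s|) ^ 2))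
        ((((hmeas s hs).sub (hmeas t ht)).pow_const 2).aestronglyMeasurable) ?_
      exact hb.mono fun p hp => by
        rwa [Real.norm_eq_abs, abs_of_nonneg (sq_nonneg _)]
    have hintle : ∫ p, (g s p - g t p) ^ 2 ∂P ≤ (K * |t - s|) ^ 2 := by
      calc ∫ p, (g s p - g t p) ^ 2 ∂P
          ≤ ∫ _, (K * |t - s|) ^ 2 ∂P := integral_mono_ae hint (integrable_const _) hb
        _ = (K * |t - s|) ^ 2 := by simp
    have hmemS : ∫ p, ((p.1.1 - p.2.1) ^ 2 + (p.1.2 - p.2.2) ^ 2) ∂(P.map Φ) ∈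
        {e | ∃ m : Measure ((ℝ × ℝ) × (ℝ × ℝ)), IsProbabilityMeasure m ∧
          m.map Prod.fst = P.map (fun p => (p.1, g s p)) ∧
          m.map Prod.snd = P.map (fun p => (p.1, g t p)) ∧
          e = ∫ p, ((p.1.1 - p.2.1) ^ 2 + (p.1.2 - p.2.2) ^ 2) ∂m} := by
      refine ⟨P.map Φ, inferInstance, ?_, ?_, rfl⟩
      · rw [Measure.map_map measurable_fst hΦ]; rfl
      · rw [Measure.map_map measurable_snd hΦ]; rfl
    have hbdd : BddBelow {e | ∃ m : Measure ((ℝ × ℝ) × (ℝ × ℝ)), IsProbabilityMeasure m ∧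
          m.map Prod.fst = P.map (fun p => (p.1, g s p)) ∧
          m.map Prod.snd = P.map (fun p => (p.1, g t p)) ∧
          e = ∫ p, ((p.1.1 - p.2.1) ^ 2 + (p.1.2 - p.2.2) ^ 2) ∂m} := by
      refine ⟨0, fun e he => ?_⟩
      obtain ⟨m, hm, _, _, he⟩ := he
      rw [he]
      exact integral_nonneg fun p => by positivity
    calc W2sqE _ _ ≤ _ := csInf_le hbdd hmemS
      _ ≤ (K * |t - s|) ^ 2 := by rw [hcost]; exact hintle
  refine ⟨fun u => P.map (fun p => (p.1, g u p)), ?_, ?_, ?_, ?_, ?_⟩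
  case _ =>
    intro u hu
    have hΦ : Measurable (fun p : ℝ × ℝ => (p.1, g u p)) :=
      measurable_fst.prodMk (hmeas u hu)
    refine ⟨Measure.isProbabilityMeasure_map hΦ.aemeasurable, ?_, ?_⟩
    · rw [Measure.map_map measurable_fst hΦ]
      exact hP.2.1
    · rw [Measure.map_map measurable_snd hΦ]
      exact hunif u hu
  case _ =>
    show P.map (fun p => (p.1, g 0 p)) = idPermuton
    have hae : (fun p : ℝ × ℝ => (p.1, g 0 p)) =ᵐ[P] (fun p => (p.1, p.1)) :=
      hg0.mono fun p hp => by simp only at hp ⊢; rw [hp]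
    rw [Measure.map_congr hae]
    have : P.map (fun p : ℝ × ℝ => (p.1, p.1)) = (P.map Prod.fst).map (fun x => (x, x)) :=
      (Measure.map_map (measurable_id.prodMk measurable_id) measurable_fst).symm
    rw [this, hP.2.1]
    rfl
  case _ =>
    show P.map (fun p => (p.1, g 1 p)) = P
    have hae : (fun p : ℝ × ℝ => (p.1, g 1 p)) =ᵐ[P] (fun p => p) :=
      hg1.mono fun p hp => by simp only at hp ⊢; rw [hp]
    rw [Measure.map_congr hae]
    exact Measure.map_id
  case _ =>
    refine ⟨K, fun s hs t ht => ?_⟩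
    calc Real.sqrt (W2sqE _ _) ≤ Real.sqrt ((K * |t - s|) ^ 2) :=
          Real.sqrt_le_sqrt (hW2 s hs t ht)
      _ = K * |t - s| := Real.sqrt_sq (by positivity)
  case _ =>
    refine ne_top_of_le_ne_top (ENNReal.ofReal_ne_top (r := K ^ 2)) ?_
    refine iSup_le fun k => iSup_le fun tt => iSup_le fun hpart => ?_
    apply ENNReal.ofReal_le_ofReal
    have hmono := part_mono hpart.2.2.2
    have hmem : ∀ i ≤ k, tt i ∈ Icc (0:ℝ) 1 := by
      intro i hik
      constructor
      · rw [← hpart.2.1]; exact hmono i hik 0 (Nat.zero_le _)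
      · rw [← hpart.2.2.1]; exact hmono k le_rfl i hik
    have hterm : ∀ i ∈ Finset.range k,
        W2sqE (P.map (fun p => (p.1, g (tt i) p))) (P.map (fun p => (p.1, g (tt (i+1)) p)))
          / (tt (i+1) - tt i) ≤ K ^ 2 * (tt (i+1) - tt i) := by
      intro i hi
      have hik : i < k := Finset.mem_range.mp hi
      have hΔ : 0 < tt (i+1) - tt i := sub_pos.mpr (hpart.2.2.2 i hik)
      rw [div_le_iff₀ hΔ]
      calc W2sqE _ _ ≤ (K * |tt (i+1) - tt i|) ^ 2 :=
            hW2 _ (hmem i hik.le) _ (hmem (i+1) hik)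
        _ = K ^ 2 * (tt (i+1) - tt i) * (tt (i+1) - tt i) := by
            rw [abs_of_pos hΔ]; ring
    calc ∑ i ∈ Finset.range k, _ / (tt (i+1) - tt i)
        ≤ ∑ i ∈ Finset.range k, K ^ 2 * (tt (i+1) - tt i) := Finset.sum_le_sum hterm
      _ = K ^ 2 * ∑ i ∈ Finset.range k, (tt (i+1) - tt i) := by rw [Finset.mul_sum]
      _ = K ^ 2 * (tt k - tt 0) := by rw [Finset.sum_range_sub]
      _ = K ^ 2 := by rw [hpart.2.1, hpart.2.2.1]; ring


end Build


section CDF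

/-- CDF of the linear projection `a X + b Y` under `P`. -/
noncomputable def Fc (P : Measure (ℝ × ℝ)) (a b z : ℝ) : ℝ :=
  (P {p | a * p.1 + b * p.2 ≤ z}).toReal

variable {P : Measure (ℝ × ℝ)}

lemma measurable_lin (a b : ℝ) : Measurable (fun p : ℝ × ℝ => a * p.1 + b * p.2) :=
  (measurable_fst.const_mul a).add (measurable_snd.const_mul b)

lemma Fc_mono (hP : IsPermuton P) (a b : ℝ) : Monotone (Fc P a b) := by
  intro z w hzw
  haveI := hP.1
  exact ENNReal.toReal_mono (measure_ne_top P _)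
    (measure_mono fun p hp => le_trans hp hzw)

lemma Fc_nonneg (a b z : ℝ) : 0 ≤ Fc P a b z := ENNReal.toReal_nonneg

lemma permuton_boxc (hP : IsPermuton P) :
    P {p : ℝ × ℝ | ¬(p.1 ∈ Icc (-1:ℝ) 1 ∧ p.2 ∈ Icc (-1:ℝ) 1)} = 0 := by
  have := permuton_box hP
  rwa [ae_iff] at this

lemma Fc_lo (hP : IsPermuton P) {a b : ℝ} (hab : |a| + |b| ≤ 1) : Fc P a b (-3) = 0 := by
  have hsub : {p : ℝ × ℝ | a * p.1 + b * p.2 ≤ -3} ⊆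
      {p : ℝ × ℝ | ¬(p.1 ∈ Icc (-1:ℝ) 1 ∧ p.2 ∈ Icc (-1:ℝ) 1)} := by
    intro p hp hbox
    simp only [mem_setOf_eq, mem_Icc] at hp hbox
    have h1 : |a * p.1| ≤ |a| := by
      rw [abs_mul]
      calc |a| * |p.1| ≤ |a| * 1 := by
            apply mul_le_mul_of_nonneg_left _ (abs_nonneg a)
            rw [abs_le]; exact ⟨hbox.1.1, hbox.1.2⟩
        _ = |a| := mul_one _
    have h2 : |b * p.2| ≤ |b| := by
      rw [abs_mul]
      calc |b| * |p.2| ≤ |b| * 1 := by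
            apply mul_le_mul_of_nonneg_left _ (abs_nonneg b)
            rw [abs_le]; exact ⟨hbox.2.1, hbox.2.2⟩
        _ = |b| := mul_one _
    have := abs_add_le (a * p.1) (b * p.2)
    have habs : |a * p.1 + b * p.2| ≤ 1 := by linarith
    rw [abs_le] at habs
    linarith [habs.1]
  have : P {p : ℝ × ℝ | a * p.1 + b * p.2 ≤ -3} = 0 :=
    measure_mono_null hsub (permuton_boxc hP)
  rw [Fc, this, ENNReal.toReal_zero]

lemma Fc_hi (hP : IsPermuton P) {a b : ℝ} (hab : |a| + |b| ≤ 1) : Fc P a b 3 = 1 := by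
  haveI := hP.1
  have hsub : {p : ℝ × ℝ | a * p.1 + b * p.2 ≤ 3}ᶜ ⊆
      {p : ℝ × ℝ | ¬(p.1 ∈ Icc (-1:ℝ) 1 ∧ p.2 ∈ Icc (-1:ℝ) 1)} := by
    intro p hp hbox
    simp only [mem_compl_iff, mem_setOf_eq, not_le, mem_Icc] at hp hbox
    have h1 : |a * p.1| ≤ |a| := by
      rw [abs_mul]
      calc |a| * |p.1| ≤ |a| * 1 := by
            apply mul_le_mul_of_nonneg_left _ (abs_nonneg a)
            rw [abs_le]; exact ⟨hbox.1.1, hbox.1.2⟩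
        _ = |a| := mul_one _
    have h2 : |b * p.2| ≤ |b| := by
      rw [abs_mul]
      calc |b| * |p.2| ≤ |b| * 1 := by
            apply mul_le_mul_of_nonneg_left _ (abs_nonneg b)
            rw [abs_le]; exact ⟨hbox.2.1, hbox.2.2⟩
        _ = |b| := mul_one _
    have := abs_add_le (a * p.1) (b * p.2)
    have habs : |a * p.1 + b * p.2| ≤ 1 := by linarith
    rw [abs_le] at habs
    linarith [habs.2]
  have h0 : P ({p : ℝ × ℝ | a * p.1 + b * p.2 ≤ 3})ᶜ = 0 :=
    measure_mono_null hsub (permuton_boxc hP)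
  have hm : MeasurableSet {p : ℝ × ℝ | a * p.1 + b * p.2 ≤ 3} :=
    measurableSet_le (measurable_lin a b) measurable_const
  rw [Fc, (prob_compl_eq_zero_iff hm).mp h0, ENNReal.toReal_one]

/-- one-sided increments control the full Lipschitz property for a monotone function -/
lemma Fc_lip (hP : IsPermuton P) {a b L : ℝ}
    (hstep : ∀ z w, z ≤ w → Fc P a b w - Fc P a b z ≤ L * (w - z)) :
    ∀ z w, |Fc P a b z - Fc P a b w| ≤ L * |z - w| := by
  intro z w
  rcases le_total z w with h | h
  · rw [abs_of_nonpos (by linarith [Fc_mono hP a b h] : Fc P a b z - Fc P a b w ≤ 0),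
      abs_of_nonpos (by linarith : z - w ≤ 0)]
    have := hstep z w h
    linarith
  · rw [abs_of_nonneg (by linarith [Fc_mono hP a b h] : 0 ≤ Fc P a b z - Fc P a b w),
      abs_of_nonneg (by linarith : 0 ≤ z - w)]
    have := hstep w z h
    linarith

lemma Fc_cont (hP : IsPermuton P) {a b L : ℝ} (hL : 0 ≤ L)
    (hstep : ∀ z w, z ≤ w → Fc P a b w - Fc P a b z ≤ L * (w - z)) :
    Continuous (Fc P a b) := by
  have hlip := Fc_lip hP hstep
  refine LipschitzWith.continuous (K := Real.toNNReal L) ?_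
  refine LipschitzWith.of_dist_le_mul fun z w => ?_
  rw [Real.dist_eq, Real.dist_eq, Real.coe_toNNReal L hL]
  exact hlip z w

/-- increments of the CDF of a projection are controlled by measures of strips -/
lemma Fc_step_of_strip (hP : IsPermuton P) {a b L : ℝ}
    (hstrip : ∀ z w, z ≤ w →
      (P {p | z < a * p.1 + b * p.2 ∧ a * p.1 + b * p.2 ≤ w}).toReal ≤ L * (w - z)) :
    ∀ z w, z ≤ w → Fc P a b w - Fc P a b z ≤ L * (w - z) := by
  haveI := hP.1
  intro z w hzw
  have hsub : {p : ℝ × ℝ | a * p.1 + b * p.2 ≤ w} ⊆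
      {p : ℝ × ℝ | a * p.1 + b * p.2 ≤ z} ∪
      {p : ℝ × ℝ | z < a * p.1 + b * p.2 ∧ a * p.1 + b * p.2 ≤ w} := by
    intro p hp
    rcases le_or_gt (a * p.1 + b * p.2) z with h | h
    · exact Or.inl h
    · exact Or.inr ⟨h, hp⟩
  have hmeas := measure_union_le (μ := P) {p : ℝ × ℝ | a * p.1 + b * p.2 ≤ z}
    {p : ℝ × ℝ | z < a * p.1 + b * p.2 ∧ a * p.1 + b * p.2 ≤ w}
  have h1 : P {p : ℝ × ℝ | a * p.1 + b * p.2 ≤ w} ≤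
      P {p : ℝ × ℝ | a * p.1 + b * p.2 ≤ z} +
      P {p : ℝ × ℝ | z < a * p.1 + b * p.2 ∧ a * p.1 + b * p.2 ≤ w} :=
    le_trans (measure_mono hsub) hmeas
  have h2 := ENNReal.toReal_mono (by
      exact ENNReal.add_ne_top.mpr ⟨measure_ne_top P _, measure_ne_top P _⟩) h1
  rw [ENNReal.toReal_add (measure_ne_top P _) (measure_ne_top P _)] at h2
  have := hstrip z w hzw
  unfold Fc
  linarith

end CDF


section Strip

variable {P : Measure (ℝ × ℝ)}

lemma strip_of_plank (hP : IsPermuton P) {a b C n θ : ℝ} (hn : 0 < n) (h2n : 1 ≤ 2 * n)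
    (hC1 : 1 ≤ C)
    (hcos : Real.cos (θ + π / 2) = a / n) (hsin : Real.sin (θ + π / 2) = b / n)
    (hplank : ∀ u v : ℝ, u ≤ v → (P (plank θ u v)).toReal ≤ C * (v - u)) :
    ∀ z w, z ≤ w →
      (P {p | z < a * p.1 + b * p.2 ∧ a * p.1 + b * p.2 ≤ w}).toReal ≤ (2 * C) * (w - z) := by
  haveI := hP.1
  intro z w hzw
  have key : ∀ p : ℝ × ℝ,
      Real.cos (θ + π / 2) * p.1 + Real.sin (θ + π / 2) * p.2
        = (a * p.1 + b * p.2) / n := by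
    intro p; rw [hcos, hsin]; ring
  have hsub : {p : ℝ × ℝ | z < a * p.1 + b * p.2 ∧ a * p.1 + b * p.2 ≤ w} ⊆
      plank θ (z / n) (w / n) ∪ {p : ℝ × ℝ | ¬(p.1 ∈ Icc (-1:ℝ) 1 ∧ p.2 ∈ Icc (-1:ℝ) 1)} := by
    intro p hp
    by_cases hbox : p.1 ∈ Icc (-1:ℝ) 1 ∧ p.2 ∈ Icc (-1:ℝ) 1
    · left
      refine ⟨hbox.1, hbox.2, ?_, ?_⟩
      · rw [key p]
        gcongr
        exact hp.1.le
      · rw [key p]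
        gcongr
        exact hp.2
    · right; exact hbox
  have h1 : P {p : ℝ × ℝ | z < a * p.1 + b * p.2 ∧ a * p.1 + b * p.2 ≤ w}
      ≤ P (plank θ (z / n) (w / n)) := by
    refine le_trans (measure_mono hsub) ?_
    refine le_trans (measure_union_le _ _) ?_
    rw [permuton_boxc hP, add_zero]
  have h2 : (P {p : ℝ × ℝ | z < a * p.1 + b * p.2 ∧ a * p.1 + b * p.2 ≤ w}).toReal
      ≤ (P (plank θ (z / n) (w / n))).toReal :=
    ENNReal.toReal_mono (measure_ne_top P _) h1
  have h3 := hplank (z / n) (w / n) (by gcongr)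
  have h4 : C * (w / n - z / n) ≤ 2 * C * (w - z) := by
    have he : C * (w / n - z / n) = (C * (w - z)) / n := by ring
    rw [he, div_le_iff₀ hn]
    nlinarith [mul_nonneg (mul_nonneg (by linarith : (0:ℝ) ≤ C) (sub_nonneg.mpr hzw))
      (by linarith : (0:ℝ) ≤ 2 * n - 1)]
  linarith

lemma strip_fst_neg (hP : IsPermuton P) {C : ℝ} (hC1 : 1 ≤ C) :
    ∀ z w, z ≤ w →
      (P {p | z < -1 * p.1 + 0 * p.2 ∧ -1 * p.1 + 0 * p.2 ≤ w}).toReal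
        ≤ (2 * C) * (w - z) := by
  haveI := hP.1
  intro z w hzw
  have hseteq : {p : ℝ × ℝ | z < -1 * p.1 + 0 * p.2 ∧ -1 * p.1 + 0 * p.2 ≤ w}
      = Prod.fst ⁻¹' (Ico (-w) (-z)) := by
    ext p
    simp only [mem_setOf_eq, mem_preimage, mem_Ico]
    constructor <;> intro h <;> constructor <;> linarith [h.1, h.2]
  have : P {p : ℝ × ℝ | z < -1 * p.1 + 0 * p.2 ∧ -1 * p.1 + 0 * p.2 ≤ w}
      = unif (Ico (-w) (-z)) := by
    rw [hseteq, ← Measure.map_apply measurable_fst measurableSet_Ico, hP.2.1]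
  rw [this]
  have hle : unif (Ico (-w) (-z)) ≤ ENNReal.ofReal ((w - z) / 2) := by
    rw [unif_apply measurableSet_Ico]
    calc 2⁻¹ * volume (Ico (-w) (-z) ∩ Icc (-1:ℝ) 1)
        ≤ 2⁻¹ * volume (Ico (-w) (-z)) := by
          gcongr
          exact inter_subset_left
      _ = 2⁻¹ * ENNReal.ofReal (-z - -w) := by rw [Real.volume_Ico]
      _ = ENNReal.ofReal ((-z - -w) / 2) := ofReal_half_mul _
      _ = ENNReal.ofReal ((w - z) / 2) := by ring_nf
  calc (unif (Ico (-w) (-z))).toReal ≤ ((w - z) / 2) := by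
        refine le_trans (ENNReal.toReal_mono ENNReal.ofReal_ne_top hle) ?_
        rw [ENNReal.toReal_ofReal (by linarith)]
    _ ≤ (2 * C) * (w - z) := by nlinarith

end Strip


section Angles

variable {P : Measure (ℝ × ℝ)}

lemma strip_neg (hP : IsPermuton P) {C : ℝ}
    (hC : ∀ θ a b : ℝ, -(π / 2) ≤ θ → θ ≤ 0 → a ≤ b → (P (plank θ a b)).toReal ≤ C * (b - a))
    (hC1 : 1 ≤ C) {t : ℝ} (ht0 : 0 ≤ t) (ht1 : t ≤ 1) :
    ∀ z w, z ≤ w →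
      (P {p | z < (1 - t) * p.1 + t * p.2 ∧ (1 - t) * p.1 + t * p.2 ≤ w}).toReal
        ≤ (2 * C) * (w - z) := by
  set n := Real.sqrt ((1 - t) ^ 2 + t ^ 2) with hndef
  have hnsq : n ^ 2 = (1 - t) ^ 2 + t ^ 2 := Real.sq_sqrt (by positivity)
  have hn0 : 0 ≤ n := Real.sqrt_nonneg _
  have h14 : ((1:ℝ) / 2) ^ 2 ≤ (1 - t) ^ 2 + t ^ 2 := by nlinarith [sq_nonneg (1 - 2 * t)]
  have hhalf : (1:ℝ) / 2 ≤ n := by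
    calc (1:ℝ) / 2 = Real.sqrt (((1:ℝ) / 2) ^ 2) := by
          rw [Real.sqrt_sq]; norm_num
      _ ≤ n := Real.sqrt_le_sqrt h14
  have hn : 0 < n := by linarith
  have h2n : 1 ≤ 2 * n := by linarith
  have hfrac0 : 0 ≤ (1 - t) / n := div_nonneg (by linarith) hn0
  have hfrac1 : (1 - t) / n ≤ 1 := by
    rw [div_le_one hn]
    nlinarith [hnsq, hn0, sq_nonneg t]
  set θ := -Real.arcsin ((1 - t) / n) with hθdef
  have hθ1 : -(π / 2) ≤ θ := neg_le_neg (Real.arcsin_le_pi_div_two _)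
  have hθ2 : θ ≤ 0 := neg_nonpos.mpr (Real.arcsin_nonneg.mpr hfrac0)
  have hsinθ : Real.sin θ = -((1 - t) / n) := by
    rw [hθdef, Real.sin_neg, Real.sin_arcsin (by linarith) hfrac1]
  have hcosθ : Real.cos θ = t / n := by
    rw [hθdef, Real.cos_neg, Real.cos_arcsin]
    have he : 1 - ((1 - t) / n) ^ 2 = (t / n) ^ 2 := by
      field_simp
      nlinarith [hnsq]
    rw [he, Real.sqrt_sq (by positivity)]
  have hcos : Real.cos (θ + π / 2) = (1 - t) / n := by
    rw [Real.cos_add_pi_div_two, hsinθ]; ring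
  have hsin : Real.sin (θ + π / 2) = t / n := by
    rw [Real.sin_add_pi_div_two, hcosθ]
  exact strip_of_plank hP hn h2n hC1 hcos hsin (fun u v huv => hC θ u v hθ1 hθ2 huv)

lemma strip_pos (hP : IsPermuton P) {C : ℝ}
    (hC : ∀ θ a b : ℝ, 0 ≤ θ → θ < π / 2 → a ≤ b → (P (plank θ a b)).toReal ≤ C * (b - a))
    (hC1 : 1 ≤ C) {v : ℝ} (hv0 : 0 ≤ v) (hv1 : v ≤ 1) :
    ∀ z w, z ≤ w →
      (P {p | z < -(1 - v) * p.1 + v * p.2 ∧ -(1 - v) * p.1 + v * p.2 ≤ w}).toReal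
        ≤ (2 * C) * (w - z) := by
  rcases eq_or_lt_of_le hv0 with hv | hv
  · -- v = 0 : the projection is -X, handled by the uniform marginal
    intro z w hzw
    have hseteq : {p : ℝ × ℝ | z < -(1 - v) * p.1 + v * p.2 ∧ -(1 - v) * p.1 + v * p.2 ≤ w}
        = {p : ℝ × ℝ | z < -1 * p.1 + 0 * p.2 ∧ -1 * p.1 + 0 * p.2 ≤ w} := by
      ext p
      simp only [mem_setOf_eq, ← hv]
      constructor <;> intro h <;> constructor <;> linarith [h.1, h.2]
    rw [hseteq]
    exact strip_fst_neg hP hC1 z w hzw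
  · set n := Real.sqrt ((1 - v) ^ 2 + v ^ 2) with hndef
    have hnsq : n ^ 2 = (1 - v) ^ 2 + v ^ 2 := Real.sq_sqrt (by positivity)
    have hn0 : 0 ≤ n := Real.sqrt_nonneg _
    have h14 : ((1:ℝ) / 2) ^ 2 ≤ (1 - v) ^ 2 + v ^ 2 := by nlinarith [sq_nonneg (1 - 2 * v)]
    have hhalf : (1:ℝ) / 2 ≤ n := by
      calc (1:ℝ) / 2 = Real.sqrt (((1:ℝ) / 2) ^ 2) := by
            rw [Real.sqrt_sq]; norm_num
        _ ≤ n := Real.sqrt_le_sqrt h14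
    have hn : 0 < n := by linarith
    have h2n : 1 ≤ 2 * n := by linarith
    have hfrac0 : 0 ≤ v / n := div_nonneg hv0 hn0
    have hfrac1 : v / n ≤ 1 := by
      rw [div_le_one hn]
      nlinarith [hnsq, hn0, sq_nonneg (1 - v)]
    set θ := Real.arccos (v / n) with hθdef
    have hθ1 : 0 ≤ θ := Real.arccos_nonneg _
    have hθ2 : θ < π / 2 := Real.arccos_lt_pi_div_two.mpr (by positivity)
    have hcosθ : Real.cos θ = v / n := Real.cos_arccos (by linarith) hfrac1
    have hsinθ : Real.sin θ = (1 - v) / n := by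
      rw [hθdef, Real.sin_arccos]
      have he : 1 - (v / n) ^ 2 = ((1 - v) / n) ^ 2 := by
        field_simp
        nlinarith [hnsq]
      rw [he, Real.sqrt_sq (div_nonneg (by linarith) hn0)]
    have hcos : Real.cos (θ + π / 2) = -(1 - v) / n := by
      rw [Real.cos_add_pi_div_two, hsinθ]; ring
    have hsin : Real.sin (θ + π / 2) = v / n := by
      rw [Real.sin_add_pi_div_two, hcosθ]
    exact strip_of_plank hP hn h2n hC1 hcos hsin (fun u v' huv => hC θ u v' hθ1 hθ2 huv)

end Angles


section FcMore

variable {P : Measure (ℝ × ℝ)}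

lemma Fc_translate (hP : IsPermuton P) {a b a' b' δ : ℝ} (hδ : 0 ≤ δ)
    (hae : ∀ᵐ p ∂P, |(a - a') * p.1 + (b - b') * p.2| ≤ δ) :
    ∀ z, Fc P a b z ≤ Fc P a' b' (z + δ) := by
  haveI := hP.1
  intro z
  refine ENNReal.toReal_mono (measure_ne_top P _) (measure_mono_ae ?_)
  filter_upwards [hae] with p hp hmem
  have hmem' : a * p.1 + b * p.2 ≤ z := hmem
  show a' * p.1 + b' * p.2 ≤ z + δ
  have := abs_le.mp hp
  linarith [this.1, this.2]

lemma Fc_fst (hP : IsPermuton P) {z : ℝ} (h1 : -1 ≤ z) (h2 : z ≤ 1) :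
    Fc P 1 0 z = (z + 1) / 2 := by
  have hset : {p : ℝ × ℝ | 1 * p.1 + 0 * p.2 ≤ z} = {p : ℝ × ℝ | p.1 ≤ z} := by
    ext p; simp
  rw [Fc, hset, permuton_fst_Iic hP h1 h2]

lemma Fc_snd (hP : IsPermuton P) {z : ℝ} (h1 : -1 ≤ z) (h2 : z ≤ 1) :
    Fc P 0 1 z = (z + 1) / 2 := by
  have hset : {p : ℝ × ℝ | 0 * p.1 + 1 * p.2 ≤ z} = {p : ℝ × ℝ | p.2 ≤ z} := by
    ext p; simp
  rw [Fc, hset, permuton_snd_Iic hP h1 h2]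

lemma Fc_negfst (hP : IsPermuton P) {z : ℝ} (h1 : -1 ≤ z) (h2 : z ≤ 1) :
    Fc P (-1) 0 z = (z + 1) / 2 := by
  have hset : {p : ℝ × ℝ | -1 * p.1 + 0 * p.2 ≤ z} = {p : ℝ × ℝ | -z ≤ p.1} := by
    ext p
    simp only [mem_setOf_eq]
    constructor <;> intro h <;> linarith
  rw [Fc, hset, permuton_fst_Ici hP (by linarith) (by linarith)]
  ring

end FcMore

section NegCase

variable {P : Measure (ℝ × ℝ)}

lemma neg_case (hP : IsPermuton P) {C : ℝ} (hC1 : 1 ≤ C)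
    (hC : ∀ θ a b : ℝ, -(π / 2) ≤ θ → θ ≤ 0 → a ≤ b → (P (plank θ a b)).toReal ≤ C * (b - a)) :
    ∃ γ : ℝ → Measure (ℝ × ℝ),
      (∀ t ∈ Icc (0:ℝ) 1, IsPermuton (γ t)) ∧
      γ 0 = idPermuton ∧ γ 1 = P ∧
      (∃ C : ℝ, ∀ s ∈ Icc (0:ℝ) 1, ∀ t ∈ Icc (0:ℝ) 1,
        Real.sqrt (W2sqE (γ s) (γ t)) ≤ C * |t - s|) ∧
      energyOf (fun s t => W2sqE (γ s) (γ t)) ≠ ⊤ := by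
  haveI := hP.1
  have hstep : ∀ t ∈ Icc (0:ℝ) 1, ∀ z w, z ≤ w →
      Fc P (1 - t) t w - Fc P (1 - t) t z ≤ (2 * C) * (w - z) := by
    intro t ht
    exact Fc_step_of_strip hP (strip_neg hP hC hC1 ht.1 ht.2)
  have habs : ∀ t ∈ Icc (0:ℝ) 1, |1 - t| + |t| ≤ 1 := by
    intro t ht
    rw [abs_of_nonneg (by linarith [ht.2]), abs_of_nonneg ht.1]
    linarith
  refine build_path P hP
    (fun t p => 2 * Fc P (1 - t) t ((1 - t) * p.1 + t * p.2) - 1) (32 * C)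
    (by linarith) ?_ ?_ ?_ ?_ ?_
  · -- measurability
    intro u hu
    exact ((((Fc_mono hP (1 - u) u).measurable).comp
      (measurable_lin (1 - u) u)).const_mul 2).sub_const 1
  · -- uniform marginal
    intro u hu
    exact map_quantile_unif P (fun p => (1 - u) * p.1 + u * p.2) (measurable_lin _ _)
      (Fc P (1 - u) u) (fun z => rfl)
      (Fc_cont hP (by linarith) (hstep u hu))
      (Fc_lo hP (habs u hu)) (Fc_hi hP (habs u hu))
  · -- Lipschitz
    intro u hu v hv
    filter_upwards [permuton_box hP] with p hp
    simp only [mem_Icc] at hp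
    set zu := (1 - u) * p.1 + u * p.2 with hzu
    set zv := (1 - v) * p.1 + v * p.2 with hzv
    have hxy : |p.1 - p.2| ≤ 2 := by
      rw [abs_le]
      constructor <;> linarith [hp.1.1, hp.1.2, hp.2.1, hp.2.2]
    have hzdiff : |zu - zv| ≤ 2 * |v - u| := by
      have : zu - zv = (v - u) * (p.1 - p.2) := by rw [hzu, hzv]; ring
      rw [this, abs_mul]
      calc |v - u| * |p.1 - p.2| ≤ |v - u| * 2 :=
            mul_le_mul_of_nonneg_left hxy (abs_nonneg _)
        _ = 2 * |v - u| := by ring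
    have hlipu := Fc_lip hP (hstep u hu)
    have hδ : (0:ℝ) ≤ 2 * |v - u| := by positivity
    have haeuv : ∀ᵐ p ∂P, |((1 - u) - (1 - v)) * p.1 + (u - v) * p.2| ≤ 2 * |v - u| := by
      filter_upwards [permuton_box hP] with q hq
      simp only [mem_Icc] at hq
      have : ((1 - u) - (1 - v)) * q.1 + (u - v) * q.2 = (v - u) * (q.1 - q.2) := by ring
      rw [this, abs_mul]
      have h2 : |q.1 - q.2| ≤ 2 := by
        rw [abs_le]; constructor <;> linarith [hq.1.1, hq.1.2, hq.2.1, hq.2.2]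
      calc |v - u| * |q.1 - q.2| ≤ |v - u| * 2 :=
            mul_le_mul_of_nonneg_left h2 (abs_nonneg _)
        _ = 2 * |v - u| := by ring
    have haevu : ∀ᵐ p ∂P, |((1 - v) - (1 - u)) * p.1 + (v - u) * p.2| ≤ 2 * |v - u| := by
      filter_upwards [haeuv] with q hq
      have : ((1 - v) - (1 - u)) * q.1 + (v - u) * q.2
          = -(((1 - u) - (1 - v)) * q.1 + (u - v) * q.2) := by ring
      rw [this, abs_neg]
      exact hq
    have h1 := Fc_translate hP hδ haeuv
    have h2 := Fc_translate hP hδ haevu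
    -- |F_u zv - F_v zv| ≤ (2C) * (2|v-u|)
    have hmid : |Fc P (1 - u) u zv - Fc P (1 - v) v zv| ≤ (2 * C) * (2 * |v - u|) := by
      rw [abs_le]
      constructor
      · have := h2 zv
        have := hstep u hu zv (zv + 2 * |v - u|) (by linarith)
        linarith
      · have := h1 zv
        have := hstep v hv zv (zv + 2 * |v - u|) (by linarith)
        linarith
    have hfirst : |Fc P (1 - u) u zu - Fc P (1 - u) u zv| ≤ (2 * C) * (2 * |v - u|) := by
      calc |Fc P (1 - u) u zu - Fc P (1 - u) u zv| ≤ (2 * C) * |zu - zv| := hlipu zu zv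
        _ ≤ (2 * C) * (2 * |v - u|) :=
            mul_le_mul_of_nonneg_left hzdiff (by linarith)
    calc |(2 * Fc P (1 - u) u zu - 1) - (2 * Fc P (1 - v) v zv - 1)|
        = |2 * (Fc P (1 - u) u zu - Fc P (1 - v) v zv)| := by ring_nf
      _ = 2 * |Fc P (1 - u) u zu - Fc P (1 - v) v zv| := by
          rw [abs_mul]; norm_num
      _ ≤ 2 * (|Fc P (1 - u) u zu - Fc P (1 - u) u zv|
            + |Fc P (1 - u) u zv - Fc P (1 - v) v zv|) := by
          have := abs_sub_le (Fc P (1 - u) u zu) (Fc P (1 - u) u zv) (Fc P (1 - v) v zv)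
          linarith
      _ ≤ 32 * C * |v - u| := by
          have := hfirst
          have := hmid
          nlinarith [abs_nonneg (v - u)]
  · -- g 0 = fst
    filter_upwards [permuton_box hP] with p hp
    simp only [mem_Icc] at hp
    show 2 * Fc P (1 - 0) 0 ((1 - 0) * p.1 + 0 * p.2) - 1 = p.1
    norm_num
    rw [Fc_fst hP hp.1.1 hp.1.2]
    ring
  · -- g 1 = snd
    filter_upwards [permuton_box hP] with p hp
    simp only [mem_Icc] at hp
    show 2 * Fc P (1 - 1) 1 ((1 - 1) * p.1 + 1 * p.2) - 1 = p.2
    norm_num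
    rw [Fc_snd hP hp.2.1 hp.2.2]
    ring

end NegCase


section Tent

/-- A family of measure preserving "tent" maps of [-1,1], with `T 0 = id` and
`T 1` the full tent map (which is an even function). -/
noncomputable def T (s x : ℝ) : ℝ := if x ≤ 1 - 2 * s then x else 1 - 2 * |x - (1 - s)|

lemma T_meas (s : ℝ) : Measurable (T s) := by
  unfold T
  refine Measurable.ite (measurableSet_le measurable_id measurable_const) measurable_id ?_
  exact measurable_const.sub (((measurable_id.sub_const (1 - s)).abs).const_mul 2)

lemma T_zero {x : ℝ} (hx : x ≤ 1) : T 0 x = x := by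
  unfold T
  rw [if_pos (by linarith)]

lemma T_one_even {x : ℝ} (hx1 : -1 ≤ x) (hx2 : x ≤ 1) : T 1 x = T 1 (-x) := by
  unfold T
  have e1 : (1:ℝ) - 2 * 1 = -1 := by norm_num
  have e2 : (1:ℝ) - 1 = 0 := by norm_num
  rw [e1, e2]
  rcases le_or_gt x (-1) with h | h
  · have hx : x = -1 := le_antisymm h hx1
    subst hx
    rw [if_pos le_rfl, if_neg (by norm_num)]
    norm_num
  · rw [if_neg (not_le.mpr h)]
    rcases le_or_gt 1 x with h2 | h2
    · have hx : x = 1 := le_antisymm hx2 h2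
      subst hx
      rw [if_pos (by norm_num)]
      norm_num
    · rw [if_neg (by intro hc; linarith)]
      rw [sub_zero, sub_zero, abs_neg]

lemma T_lip_le (s s' x : ℝ) (hs0 : 0 ≤ s) (h : s ≤ s') : |T s x - T s' x| ≤ 4 * (s' - s) := by
  unfold T
  have habs : ∀ y : ℝ, |y| = y ∨ |y| = -y := fun y => abs_choice y
  split_ifs with h1 h2 h2
  · simp only [sub_self, abs_zero]; linarith
  · -- x ≤ 1-2s but x > 1-2s'
    rcases abs_cases (x - (1 - s')) with ⟨he, hsg⟩ | ⟨he, hsg⟩ <;>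
      (rw [abs_le]; constructor <;> nlinarith)
  · -- x > 1-2s and x ≤ 1-2s' : impossible since 1-2s' ≤ 1-2s
    exfalso; linarith
  · rcases abs_cases (x - (1 - s)) with ⟨he1, hs1⟩ | ⟨he1, hs1⟩ <;>
      rcases abs_cases (x - (1 - s')) with ⟨he2, hs2⟩ | ⟨he2, hs2⟩ <;>
      (rw [abs_le]; constructor <;> nlinarith)

lemma T_lip (s s' x : ℝ) (hs0 : 0 ≤ s) (hs'0 : 0 ≤ s') :
    |T s x - T s' x| ≤ 4 * |s' - s| := by
  rcases le_total s s' with h | h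
  · rw [abs_of_nonneg (sub_nonneg.mpr h)]
    exact T_lip_le s s' x hs0 h
  · rw [abs_of_nonpos (sub_nonpos.mpr h), abs_sub_comm]
    have := T_lip_le s' s x hs'0 h
    linarith [this]

lemma T_range {s x : ℝ} (hs0 : 0 ≤ s) (hx1 : -1 ≤ x) (hx2 : x ≤ 1) : T s x ≤ 1 := by
  unfold T
  split_ifs with h
  · exact hx2
  · have := abs_nonneg (x - (1 - s))
    linarith

lemma T_range' {s x : ℝ} (hs1 : s ≤ 1) (hx1 : -1 ≤ x) (hx2 : x ≤ 1) : -1 ≤ T s x := by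
  unfold T
  split_ifs with h
  · exact hx1
  · push_neg at h
    have h1 : x - (1 - s) ≤ s := by linarith
    have h2 : -(s) < x - (1 - s) := by linarith
    rcases abs_cases (x - (1 - s)) with ⟨he, _⟩ | ⟨he, _⟩ <;> nlinarith

end Tent


section TentUnif

lemma unif_map_neg : unif.map (fun x : ℝ => -x) = unif := by
  refine Measure.ext_of_Iic _ _ (fun y => ?_)
  rw [Measure.map_apply measurable_neg measurableSet_Iic]
  have hpre : (fun x : ℝ => -x) ⁻¹' (Iic y) = Ici (-y) := by
    ext x; simp only [mem_preimage, mem_Iic, mem_Ici]; constructor <;> intro <;> linarith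
  rw [hpre, unif_Ici, unif_Iic]
  congr 1
  rcases le_total y 1 with h | h
  · rw [min_eq_left h, max_eq_left (by linarith)]
    ring
  · rw [min_eq_right h, max_eq_right (by linarith)]
    norm_num

lemma T_unif {s : ℝ} (hs0 : 0 ≤ s) (hs1 : s ≤ 1) : unif.map (T s) = unif := by
  refine Measure.ext_of_Iic _ _ (fun z => ?_)
  rw [Measure.map_apply (T_meas s) measurableSet_Iic, unif_apply (T_meas s measurableSet_Iic),
    unif_Iic]
  rcases lt_or_ge z (-1) with hz | hz
  · -- empty
    have he : T s ⁻¹' Iic z ∩ Icc (-1:ℝ) 1 = ∅ := by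
      ext x
      simp only [mem_inter_iff, mem_preimage, mem_Iic, mem_Icc, mem_empty_iff_false, iff_false]
      rintro ⟨hT, hx1, hx2⟩
      have := T_range' hs1 hx1 hx2
      linarith
    rw [he]
    simp only [measure_empty, mul_zero]
    symm
    rw [ENNReal.ofReal_eq_zero]
    have : min z 1 ≤ z := min_le_left _ _
    linarith
  rcases le_or_gt 1 z with hz1 | hz1
  · -- full
    have he : T s ⁻¹' Iic z ∩ Icc (-1:ℝ) 1 = Icc (-1:ℝ) 1 := by
      ext x
      simp only [mem_inter_iff, mem_preimage, mem_Iic, mem_Icc]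
      constructor
      · rintro ⟨-, hx⟩; exact hx
      · rintro ⟨ha, hb⟩; exact ⟨le_trans (T_range hs0 ha hb) hz1, ha, hb⟩
    rw [he, Real.volume_Icc, min_eq_right hz1, ofReal_half_mul]
    norm_num
  · -- -1 ≤ z < 1
    rcases le_or_gt z (1 - 2 * s) with hcase | hcase
    · -- below the tent zone (up to a single point)
      have hsub1 : Icc (-1:ℝ) z ⊆ T s ⁻¹' Iic z ∩ Icc (-1:ℝ) 1 := by
        intro x hx
        simp only [mem_Icc] at hx
        constructor
        · simp only [mem_preimage, mem_Iic]
          unfold T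
          rw [if_pos (by linarith)]
          exact hx.2
        · simp only [mem_Icc]; exact ⟨hx.1, by linarith⟩
      have hsub2 : T s ⁻¹' Iic z ∩ Icc (-1:ℝ) 1 ⊆ Icc (-1:ℝ) z ∪ {1} := by
        intro x hx
        obtain ⟨hT, hbox⟩ := hx
        simp only [mem_preimage, mem_Iic] at hT
        simp only [mem_Icc] at hbox
        unfold T at hT
        split_ifs at hT with hbr
        · exact Or.inl ⟨hbox.1, hT⟩
        · push_neg at hbr
          right
          simp only [mem_singleton_iff]
          have hxle : x ≤ 1 := hbox.2
          have h1x : (1:ℝ) ≤ x := by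
            rcases abs_cases (x - (1 - s)) with ⟨habs, hsg⟩ | ⟨habs, hsg⟩ <;>
              rw [habs] at hT <;> linarith
          linarith
      have hle : volume (T s ⁻¹' Iic z ∩ Icc (-1:ℝ) 1) ≤ ENNReal.ofReal (z + 1) := by
        refine le_trans (measure_mono hsub2) ?_
        refine le_trans (measure_union_le _ _) ?_
        rw [Real.volume_singleton, add_zero, Real.volume_Icc]
        exact le_of_eq (by ring_nf)
      have hge : ENNReal.ofReal (z + 1) ≤ volume (T s ⁻¹' Iic z ∩ Icc (-1:ℝ) 1) := by
        refine le_trans (le_of_eq ?_) (measure_mono hsub1)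
        rw [Real.volume_Icc]; ring_nf
      have heq := le_antisymm hle hge
      rw [heq, min_eq_left hz1.le, ofReal_half_mul]
    · -- intersecting the tent zone
      have hmr1 : -1 ≤ (1 - s) - (1 - z) / 2 := by linarith
      have hmr2 : (1 - s) + (1 - z) / 2 ≤ 1 := by linarith
      have he : T s ⁻¹' Iic z ∩ Icc (-1:ℝ) 1
          = Icc (-1) ((1 - s) - (1 - z) / 2) ∪ Icc ((1 - s) + (1 - z) / 2) 1 := by
        ext x
        simp only [mem_inter_iff, mem_preimage, mem_Iic, mem_Icc, mem_union]
        constructor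
        · rintro ⟨hT, hbox⟩
          unfold T at hT
          split_ifs at hT with hbr
          · left
            exact ⟨hbox.1, by linarith⟩
          · push_neg at hbr
            rcases abs_cases (x - (1 - s)) with ⟨habs, hsg⟩ | ⟨habs, hsg⟩ <;> rw [habs] at hT
            · right; exact ⟨by linarith, hbox.2⟩
            · left; exact ⟨hbox.1, by linarith⟩
        · intro hx
          rcases hx with ⟨hx1, hx2⟩ | ⟨hx1, hx2⟩
          · refine ⟨?_, hx1, by linarith⟩
            unfold T
            split_ifs with hbr
            · linarith
            · push_neg at hbr
              rcases abs_cases (x - (1 - s)) with ⟨habs, hsg⟩ | ⟨habs, hsg⟩ <;> rw [habs] <;>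
                linarith
          · refine ⟨?_, by linarith, hx2⟩
            unfold T
            have hbr : ¬ (x ≤ 1 - 2 * s) := by push_neg; linarith
            rw [if_neg hbr]
            rcases abs_cases (x - (1 - s)) with ⟨habs, hsg⟩ | ⟨habs, hsg⟩ <;> rw [habs] <;>
              linarith
      rw [he, measure_union _ measurableSet_Icc]
      · rw [Real.volume_Icc, Real.volume_Icc, min_eq_left hz1.le]
        rw [← ENNReal.ofReal_add (by linarith) (by linarith), ofReal_half_mul]
        congr 1
        ring
      · refine Set.disjoint_left.mpr ?_
        intro x hx1 hx2
        simp only [mem_Icc] at hx1 hx2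
        linarith [hx1.2, hx2.1]

end TentUnif


section Glue

lemma lip_glue {φ : ℝ → ℝ} {K : ℝ} (hK : 0 ≤ K) {a b c d : ℝ} (hab : a ≤ b) (hbc : b ≤ c)
    (hcd : c ≤ d)
    (l1 : ∀ u v, a ≤ u → u ≤ b → a ≤ v → v ≤ b → |φ u - φ v| ≤ K * |v - u|)
    (l2 : ∀ u v, b ≤ u → u ≤ c → b ≤ v → v ≤ c → |φ u - φ v| ≤ K * |v - u|)
    (l3 : ∀ u v, c ≤ u → u ≤ d → c ≤ v → v ≤ d → |φ u - φ v| ≤ K * |v - u|) :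
    ∀ u v, a ≤ u → u ≤ d → a ≤ v → v ≤ d → |φ u - φ v| ≤ K * |v - u| := by
  have l1' : ∀ u v, a ≤ u → u ≤ v → v ≤ b → |φ u - φ v| ≤ K * (v - u) := by
    intro u v h1 h2 h3
    have := l1 u v h1 (le_trans h2 h3) (le_trans h1 h2) h3
    rwa [abs_of_nonneg (show (0:ℝ) ≤ v - u by linarith)] at this
  have l2' : ∀ u v, b ≤ u → u ≤ v → v ≤ c → |φ u - φ v| ≤ K * (v - u) := by
    intro u v h1 h2 h3
    have := l2 u v h1 (le_trans h2 h3) (le_trans h1 h2) h3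
    rwa [abs_of_nonneg (show (0:ℝ) ≤ v - u by linarith)] at this
  have l3' : ∀ u v, c ≤ u → u ≤ v → v ≤ d → |φ u - φ v| ≤ K * (v - u) := by
    intro u v h1 h2 h3
    have := l3 u v h1 (le_trans h2 h3) (le_trans h1 h2) h3
    rwa [abs_of_nonneg (show (0:ℝ) ≤ v - u by linarith)] at this
  have key : ∀ u v, a ≤ u → u ≤ v → v ≤ d → |φ u - φ v| ≤ K * (v - u) := by
    intro u v hau huv hvd
    rcases le_total v b with hvb | hbv
    · exact l1' u v hau huv hvb
    · rcases le_total u b with hub | hbu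
      · -- u ≤ b ≤ v
        rcases le_total v c with hvc | hcv
        · calc |φ u - φ v| ≤ |φ u - φ b| + |φ b - φ v| := abs_sub_le _ _ _
            _ ≤ K * (b - u) + K * (v - b) :=
                add_le_add (l1' u b hau hub le_rfl) (l2' b v le_rfl hbv hvc)
            _ = K * (v - u) := by ring
        · calc |φ u - φ v| ≤ |φ u - φ b| + |φ b - φ v| := abs_sub_le _ _ _
            _ ≤ K * (b - u) + (|φ b - φ c| + |φ c - φ v|) :=
                add_le_add (l1' u b hau hub le_rfl) (abs_sub_le _ _ _)
            _ ≤ K * (b - u) + (K * (c - b) + K * (v - c)) := by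
                have h1 := l2' b c le_rfl hbc le_rfl
                have h2 := l3' c v le_rfl hcv hvd
                linarith
            _ = K * (v - u) := by ring
      · rcases le_total v c with hvc | hcv
        · exact l2' u v hbu huv hvc
        · rcases le_total u c with huc | hcu
          · calc |φ u - φ v| ≤ |φ u - φ c| + |φ c - φ v| := abs_sub_le _ _ _
              _ ≤ K * (c - u) + K * (v - c) :=
                  add_le_add (l2' u c hbu huc le_rfl) (l3' c v le_rfl hcv hvd)
              _ = K * (v - u) := by ring
          · exact l3' u v hcu huv hvd
  intro u v hau hud hav hvd
  rcases le_total u v with h | h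
  · rw [abs_of_nonneg (by linarith : (0:ℝ) ≤ v - u)]
    exact key u v hau h hvd
  · rw [abs_of_nonpos (by linarith : v - u ≤ 0), abs_sub_comm]
    have := key v u hav h hud
    linarith

end Glue

section H3

variable {P : Measure (ℝ × ℝ)}

/-- pointwise Lipschitz bound in the parameter for the phase-3 (quantile) maps,
positive-plank version. -/
lemma h3_lip (hP : IsPermuton P) {C : ℝ} (hC1 : 1 ≤ C)
    (hstep : ∀ v ∈ Icc (0:ℝ) 1, ∀ z w, z ≤ w →
      Fc P (-(1 - v)) v w - Fc P (-(1 - v)) v z ≤ (2 * C) * (w - z))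
    {w w' : ℝ} (hw : w ∈ Icc (0:ℝ) 1) (hw' : w' ∈ Icc (0:ℝ) 1)
    {p : ℝ × ℝ} (hp1 : p.1 ∈ Icc (-1:ℝ) 1) (hp2 : p.2 ∈ Icc (-1:ℝ) 1) :
    |(2 * Fc P (-(1 - w)) w (-(1 - w) * p.1 + w * p.2) - 1)
      - (2 * Fc P (-(1 - w')) w' (-(1 - w') * p.1 + w' * p.2) - 1)| ≤ 16 * C * |w' - w| := by
  haveI := hP.1
  simp only [mem_Icc] at hp1 hp2
  set zu := -(1 - w) * p.1 + w * p.2 with hzu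
  set zv := -(1 - w') * p.1 + w' * p.2 with hzv
  have hzdiff : |zu - zv| ≤ 2 * |w' - w| := by
    have : zu - zv = (w - w') * (p.1 + p.2) := by rw [hzu, hzv]; ring
    rw [this, abs_mul, abs_sub_comm w w']
    have h2 : |p.1 + p.2| ≤ 2 := by
      rw [abs_le]; constructor <;> linarith [hp1.1, hp1.2, hp2.1, hp2.2]
    calc |w' - w| * |p.1 + p.2| ≤ |w' - w| * 2 :=
          mul_le_mul_of_nonneg_left h2 (abs_nonneg _)
      _ = 2 * |w' - w| := by ring
  have hlipu := Fc_lip hP (hstep w hw)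
  have hδ : (0:ℝ) ≤ 2 * |w' - w| := by positivity
  have haeuv : ∀ᵐ q ∂P, |((-(1 - w)) - (-(1 - w'))) * q.1 + (w - w') * q.2| ≤ 2 * |w' - w| := by
    filter_upwards [permuton_box hP] with q hq
    simp only [mem_Icc] at hq
    have : ((-(1 - w)) - (-(1 - w'))) * q.1 + (w - w') * q.2 = (w - w') * (q.1 + q.2) := by ring
    rw [this, abs_mul, abs_sub_comm w w']
    have h2 : |q.1 + q.2| ≤ 2 := by
      rw [abs_le]; constructor <;> linarith [hq.1.1, hq.1.2, hq.2.1, hq.2.2]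
    calc |w' - w| * |q.1 + q.2| ≤ |w' - w| * 2 :=
          mul_le_mul_of_nonneg_left h2 (abs_nonneg _)
      _ = 2 * |w' - w| := by ring
  have haevu : ∀ᵐ q ∂P, |((-(1 - w')) - (-(1 - w))) * q.1 + (w' - w) * q.2| ≤ 2 * |w' - w| := by
    filter_upwards [haeuv] with q hq
    have : ((-(1 - w')) - (-(1 - w))) * q.1 + (w' - w) * q.2
        = -(((-(1 - w)) - (-(1 - w'))) * q.1 + (w - w') * q.2) := by ring
    rw [this, abs_neg]
    exact hq
  have h1 := Fc_translate hP hδ haeuv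
  have h2 := Fc_translate hP hδ haevu
  have hmid : |Fc P (-(1 - w)) w zv - Fc P (-(1 - w')) w' zv| ≤ (2 * C) * (2 * |w' - w|) := by
    rw [abs_le]
    constructor
    · have := h2 zv
      have := hstep w hw zv (zv + 2 * |w' - w|) (by linarith)
      linarith
    · have := h1 zv
      have := hstep w' hw' zv (zv + 2 * |w' - w|) (by linarith)
      linarith
  have hfirst : |Fc P (-(1 - w)) w zu - Fc P (-(1 - w)) w zv| ≤ (2 * C) * (2 * |w' - w|) := by
    calc |Fc P (-(1 - w)) w zu - Fc P (-(1 - w)) w zv| ≤ (2 * C) * |zu - zv| := hlipu zu zv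
      _ ≤ (2 * C) * (2 * |w' - w|) := mul_le_mul_of_nonneg_left hzdiff (by linarith)
  calc |(2 * Fc P (-(1 - w)) w zu - 1) - (2 * Fc P (-(1 - w')) w' zv - 1)|
      = |2 * (Fc P (-(1 - w)) w zu - Fc P (-(1 - w')) w' zv)| := by ring_nf
    _ = 2 * |Fc P (-(1 - w)) w zu - Fc P (-(1 - w')) w' zv| := by rw [abs_mul]; norm_num
    _ ≤ 2 * (|Fc P (-(1 - w)) w zu - Fc P (-(1 - w)) w zv|
          + |Fc P (-(1 - w)) w zv - Fc P (-(1 - w')) w' zv|) := by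
        have := abs_sub_le (Fc P (-(1 - w)) w zu) (Fc P (-(1 - w)) w zv)
          (Fc P (-(1 - w')) w' zv)
        linarith
    _ ≤ 16 * C * |w' - w| := by nlinarith [abs_nonneg (w' - w)]

end H3


section PosCase

variable {P : Measure (ℝ × ℝ)}

lemma pos_case (hP : IsPermuton P) {C : ℝ} (hC1 : 1 ≤ C)
    (hC : ∀ θ a b : ℝ, 0 ≤ θ → θ < π / 2 → a ≤ b → (P (plank θ a b)).toReal ≤ C * (b - a)) :
    ∃ γ : ℝ → Measure (ℝ × ℝ),
      (∀ t ∈ Icc (0:ℝ) 1, IsPermuton (γ t)) ∧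
      γ 0 = idPermuton ∧ γ 1 = P ∧
      (∃ C : ℝ, ∀ s ∈ Icc (0:ℝ) 1, ∀ t ∈ Icc (0:ℝ) 1,
        Real.sqrt (W2sqE (γ s) (γ t)) ≤ C * |t - s|) ∧
      energyOf (fun s t => W2sqE (γ s) (γ t)) ≠ ⊤ := by
  haveI := hP.1
  have hstep : ∀ v ∈ Icc (0:ℝ) 1, ∀ z w, z ≤ w →
      Fc P (-(1 - v)) v w - Fc P (-(1 - v)) v z ≤ (2 * C) * (w - z) := by
    intro v hv
    exact Fc_step_of_strip hP (strip_pos hP hC hC1 hv.1 hv.2)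
  have habs : ∀ v ∈ Icc (0:ℝ) 1, |(-(1 - v))| + |v| ≤ 1 := by
    intro v hv
    rw [abs_of_nonpos (by linarith [hv.2] : -(1 - v) ≤ 0), abs_of_nonneg hv.1]
    linarith
  set g : ℝ → ℝ × ℝ → ℝ := fun u =>
    if u ≤ 1/4 then (fun p : ℝ × ℝ => T (4*u) p.1)
    else if u ≤ 1/2 then (fun p : ℝ × ℝ => T (2-4*u) (-p.1))
    else (fun p : ℝ × ℝ =>
      2 * Fc P (-(1-(2*u-1))) (2*u-1) (-(1-(2*u-1))*p.1 + (2*u-1)*p.2) - 1) with hgdef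
  refine build_path P hP g (32 * C) (by linarith) ?_ ?_ ?_ ?_ ?_
  · -- measurability
    intro u hu
    simp only [hgdef]
    by_cases h1 : u ≤ 1/4
    · rw [if_pos h1]
      exact (T_meas _).comp measurable_fst
    · rw [if_neg h1]
      by_cases h2 : u ≤ 1/2
      · rw [if_pos h2]
        exact (T_meas _).comp measurable_fst.neg
      · rw [if_neg h2]
        exact ((((Fc_mono hP _ _).measurable).comp (measurable_lin _ _)).const_mul 2).sub_const 1
  · -- uniform marginal
    intro u hu
    simp only [hgdef]
    by_cases h1 : u ≤ 1/4
    · rw [if_pos h1]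
      have hc : (fun p : ℝ × ℝ => T (4*u) p.1) = (T (4*u)) ∘ Prod.fst := rfl
      rw [hc, ← Measure.map_map (T_meas _) measurable_fst, hP.2.1]
      exact T_unif (by linarith [hu.1]) (by linarith)
    · rw [if_neg h1]
      by_cases h2 : u ≤ 1/2
      · rw [if_pos h2]
        have hc1 : P.map (fun p : ℝ × ℝ => T (2-4*u) (-p.1))
            = (P.map (fun p : ℝ × ℝ => -p.1)).map (T (2-4*u)) :=
          (Measure.map_map (T_meas _) measurable_fst.neg).symm
        have hc2 : P.map (fun p : ℝ × ℝ => -p.1)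
            = (P.map Prod.fst).map (fun x : ℝ => -x) :=
          (Measure.map_map measurable_neg measurable_fst).symm
        rw [hc1, hc2, hP.2.1, unif_map_neg]
        exact T_unif (by linarith) (by linarith [hu.2])
      · rw [if_neg h2]
        push_neg at h2
        have hv : (2*u-1) ∈ Icc (0:ℝ) 1 := ⟨by linarith, by linarith [hu.2]⟩
        exact map_quantile_unif P (fun p => -(1-(2*u-1))*p.1 + (2*u-1)*p.2)
          (measurable_lin _ _) (Fc P (-(1-(2*u-1))) (2*u-1)) (fun z => rfl)
          (Fc_cont hP (by linarith) (hstep _ hv))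
          (Fc_lo hP (habs _ hv)) (Fc_hi hP (habs _ hv))
  · -- Lipschitz
    intro u hu v hv
    filter_upwards [permuton_box hP] with p hp
    have hp1 := hp.1
    have hp2 := hp.2
    simp only [mem_Icc] at hp1 hp2
    have hφ2 : ∀ w, 1/4 ≤ w → w ≤ 1/2 → g w p = T (2-4*w) (-p.1) := by
      intro w h14 h12
      simp only [hgdef]
      by_cases hw : w ≤ 1/4
      · have hw4 : w = 1/4 := le_antisymm hw h14
        subst hw4
        rw [if_pos le_rfl]
        show T (4*(1/4)) p.1 = T (2-4*(1/4)) (-p.1)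
        norm_num
        exact T_one_even hp1.1 hp1.2
      · rw [if_neg hw, if_pos h12]
    have hφ3 : ∀ w, 1/2 ≤ w → w ≤ 1 → g w p
        = 2 * Fc P (-(1-(2*w-1))) (2*w-1) (-(1-(2*w-1))*p.1 + (2*w-1)*p.2) - 1 := by
      intro w h12 h1w
      simp only [hgdef]
      by_cases hw : w ≤ 1/2
      · have hw2 : w = 1/2 := le_antisymm hw h12
        subst hw2
        rw [if_neg (by norm_num), if_pos le_rfl]
        show T (2-4*(1/2)) (-p.1)
            = 2 * Fc P (-(1-(2*(1/2)-1))) (2*(1/2)-1)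
                (-(1-(2*(1/2)-1))*p.1 + (2*(1/2)-1)*p.2) - 1
        norm_num
        rw [T_zero (by linarith [hp1.1])]
        rw [Fc_negfst hP (by linarith [hp1.2]) (by linarith [hp1.1])]
        ring
      · rw [if_neg (by intro hc; linarith), if_neg hw]
    have l1 : ∀ x y, (0:ℝ) ≤ x → x ≤ 1/4 → (0:ℝ) ≤ y → y ≤ 1/4 →
        |g x p - g y p| ≤ 32 * C * |y - x| := by
      intro x y hx0 hx4 hy0 hy4
      have hgx : g x p = T (4*x) p.1 := by simp only [hgdef]; rw [if_pos hx4]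
      have hgy : g y p = T (4*y) p.1 := by simp only [hgdef]; rw [if_pos hy4]
      rw [hgx, hgy]
      calc |T (4*x) p.1 - T (4*y) p.1| ≤ 4 * |4*y - 4*x| :=
            T_lip _ _ _ (by linarith) (by linarith)
        _ = 16 * |y - x| := by
            rw [show (4:ℝ)*y - 4*x = 4*(y-x) by ring, abs_mul]
            rw [show |(4:ℝ)| = 4 by norm_num]
            ring
        _ ≤ 32 * C * |y - x| := by nlinarith [abs_nonneg (y - x)]
    have l2 : ∀ x y, (1:ℝ)/4 ≤ x → x ≤ 1/2 → (1:ℝ)/4 ≤ y → y ≤ 1/2 →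
        |g x p - g y p| ≤ 32 * C * |y - x| := by
      intro x y hx0 hx4 hy0 hy4
      rw [hφ2 x hx0 hx4, hφ2 y hy0 hy4]
      calc |T (2-4*x) (-p.1) - T (2-4*y) (-p.1)| ≤ 4 * |(2-4*y) - (2-4*x)| :=
            T_lip _ _ _ (by linarith) (by linarith)
        _ = 16 * |y - x| := by
            rw [show (2:ℝ)-4*y - (2-4*x) = -(4*(y-x)) by ring, abs_neg, abs_mul]
            rw [show |(4:ℝ)| = 4 by norm_num]
            ring
        _ ≤ 32 * C * |y - x| := by nlinarith [abs_nonneg (y - x)]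
    have l3 : ∀ x y, (1:ℝ)/2 ≤ x → x ≤ 1 → (1:ℝ)/2 ≤ y → y ≤ 1 →
        |g x p - g y p| ≤ 32 * C * |y - x| := by
      intro x y hx0 hx4 hy0 hy4
      rw [hφ3 x hx0 hx4, hφ3 y hy0 hy4]
      have := h3_lip hP hC1 hstep (w := 2*x-1) (w' := 2*y-1)
        ⟨by linarith, by linarith⟩ ⟨by linarith, by linarith⟩ hp.1 hp.2
      calc |(2 * Fc P (-(1-(2*x-1))) (2*x-1) (-(1-(2*x-1))*p.1 + (2*x-1)*p.2) - 1)
          - (2 * Fc P (-(1-(2*y-1))) (2*y-1) (-(1-(2*y-1))*p.1 + (2*y-1)*p.2) - 1)|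
          ≤ 16 * C * |2*y-1 - (2*x-1)| := this
        _ = 32 * C * |y - x| := by
            rw [show 2*y-1 - (2*x-1) = 2*(y-x) by ring, abs_mul]
            rw [show |(2:ℝ)| = 2 by norm_num]
            ring
    exact lip_glue (by linarith) (by norm_num) (by norm_num) (by norm_num) l1 l2 l3
      u v hu.1 hu.2 hv.1 hv.2
  · -- g 0 = fst
    filter_upwards [permuton_box hP] with p hp
    have hp1 := hp.1
    simp only [mem_Icc] at hp1
    simp only [hgdef]
    rw [if_pos (by norm_num : (0:ℝ) ≤ 1/4)]
    show T (4*0) p.1 = p.1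
    norm_num
    exact T_zero hp1.2
  · -- g 1 = snd
    filter_upwards [permuton_box hP] with p hp
    have hp2 := hp.2
    simp only [mem_Icc] at hp2
    simp only [hgdef]
    rw [if_neg (by norm_num : ¬((1:ℝ) ≤ 1/4)), if_neg (by norm_num : ¬((1:ℝ) ≤ 1/2))]
    show 2 * Fc P (-(1-(2*1-1))) (2*1-1) (-(1-(2*1-1))*p.1 + (2*1-1)*p.2) - 1 = p.2
    norm_num
    rw [Fc_snd hP hp2.1 hp2.2]
    ring

end PosCase


end Aux

/-- for a permuton P with the plank property there is a permuton-valued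
path from the identity permuton to P that is Lipschitz in the 2-Wasserstein metric;
in particular it has finite energy. -/
theorem lipschitz_path_exists
    (P : Measure (ℝ × ℝ)) (hP : IsPermuton P) (hplank : HasPlankProperty P) :
    ∃ γ : ℝ → Measure (ℝ × ℝ),
      (∀ t ∈ Icc (0:ℝ) 1, IsPermuton (γ t)) ∧
      γ 0 = idPermuton ∧ γ 1 = P ∧
      (∃ C : ℝ, ∀ s ∈ Icc (0:ℝ) 1, ∀ t ∈ Icc (0:ℝ) 1,
        Real.sqrt (W2sqE (γ s) (γ t)) ≤ C * |t - s|) ∧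
      energyOf (fun s t => W2sqE (γ s) (γ t)) ≠ ⊤ := by
  rcases hplank with ⟨C0, hC⟩ | ⟨C0, hC⟩
  · refine neg_case hP (le_max_right C0 1) (fun θ a b h1 h2 h3 => ?_)
    exact le_trans (hC θ a b h1 h2 h3)
      (mul_le_mul_of_nonneg_right (le_max_left _ _) (by linarith))
  · refine pos_case hP (le_max_right C0 1) (fun θ a b h1 h2 h3 => ?_)
    exact le_trans (hC θ a b h1 h2 h3)
      (mul_le_mul_of_nonneg_right (le_max_left _ _) (by linarith))
end
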